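/- arXiv:0804.3230 — 14 statements merged into one kernel-verified Lean document; each statement's English description precedes it below -/
import Mathlib

section
/- Let a < b be real numbers, let f : ℝ → ℝ be continuous on [a,b] and differentiable on (a,b), and let M ≥ 0 satisfy |f'(t)| ≤ M for all t ∈ (a,b). Then for every x ∈ [a,b], |∫_a^b f(t) dt − f(x)·(b−a)| ≤ ((b−a)²/4 + (x − (a+b)/2)²)·M. -/
/-- Classical Ostrowski inequality. -/
theorem ostrowski_classical (a b M : ℝ) (hab : a < b) (f f' : ℝ → ℝ)
    (hcont : ContinuousOn f (Set.Icc a b))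
    (hderiv : ∀ t ∈ Set.Ioo a b, HasDerivAt f (f' t) t)
    (hM : 0 ≤ M) (hbound : ∀ t ∈ Set.Ioo a b, |f' t| ≤ M)
    (x : ℝ) (hx : x ∈ Set.Icc a b) :
    |(∫ t in a..b, f t) - f x * (b - a)| ≤
      ((b - a) ^ 2 / 4 + (x - (a + b) / 2) ^ 2) * M := by
  obtain ⟨hax, hxb⟩ := hx
  -- Lipschitz bound via MVT
  have key : ∀ s t : ℝ, s ∈ Set.Icc a b → t ∈ Set.Icc a b → s ≤ t →
      |f t - f s| ≤ M * (t - s) := by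
    intro s t hs ht hst
    rcases eq_or_lt_of_le hst with h | h
    · rw [h]; simp
    · obtain ⟨c, hc, hc'⟩ := exists_hasDerivAt_eq_slope f f' h
        (hcont.mono (Set.Icc_subset_Icc hs.1 ht.2))
        (fun y hy => hderiv y ⟨lt_of_le_of_lt hs.1 hy.1, lt_of_lt_of_le hy.2 ht.2⟩)
      have : f t - f s = f' c * (t - s) := by
        have hts : (t - s) ≠ 0 := ne_of_gt (by linarith)
        field_simp [hts] at hc'
        linarith
      rw [this, abs_mul, abs_of_nonneg (by linarith : (0:ℝ) ≤ t - s)]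
      exact mul_le_mul_of_nonneg_right
        (hbound c ⟨lt_of_le_of_lt hs.1 hc.1, lt_of_lt_of_le hc.2 ht.2⟩) (by linarith)
  have key' : ∀ t ∈ Set.Icc a b, |f t - f x| ≤ M * |t - x| := by
    intro t ht
    rcases le_total x t with h | h
    · have := key x t ⟨hax, hxb⟩ ht h
      rwa [abs_of_nonneg (by linarith : (0:ℝ) ≤ t - x)]
    · calc |f t - f x| = |f x - f t| := abs_sub_comm _ _
        _ ≤ M * (x - t) := key t x ht ⟨hax, hxb⟩ h
        _ = M * |t - x| := by rw [abs_of_nonpos (by linarith : t - x ≤ 0)]; ring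
  have hfint : IntervalIntegrable f MeasureTheory.volume a b :=
    hcont.intervalIntegrable_of_Icc hab.le
  have h1 : (∫ t in a..b, f t) - f x * (b - a) = ∫ t in a..b, (f t - f x) := by
    rw [intervalIntegral.integral_sub hfint intervalIntegrable_const,
      intervalIntegral.integral_const, smul_eq_mul, mul_comm]
  rw [h1]
  have habs : |∫ t in a..b, (f t - f x)| ≤ ∫ t in a..b, |f t - f x| :=
    intervalIntegral.abs_integral_le_integral_abs hab.le
  have hint1 : IntervalIntegrable (fun t => |f t - f x|) MeasureTheory.volume a b :=
    (hfint.sub intervalIntegrable_const).abs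
  have hint2 : IntervalIntegrable (fun t => M * |t - x|) MeasureTheory.volume a b :=
    (continuous_const.mul (continuous_id.sub continuous_const).abs).intervalIntegrable a b
  have hmono : (∫ t in a..b, |f t - f x|) ≤ ∫ t in a..b, M * |t - x| := by
    apply intervalIntegral.integral_mono_on hab.le hint1 hint2
    exact key'
  -- compute ∫ |t - x|
  have hsplit : (∫ t in a..b, |t - x|) = (x - a)^2 / 2 + (b - x)^2 / 2 := by
    have cabs : Continuous fun t : ℝ => |t - x| := (continuous_id.sub continuous_const).abs
    rw [← intervalIntegral.integral_add_adjacent_intervals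
      (a := a) (b := x) (c := b)
      (cabs.intervalIntegrable a x) (cabs.intervalIntegrable x b)]
    have e1 : (∫ t in a..x, |t - x|) = ∫ t in a..x, (x - t) := by
      apply intervalIntegral.integral_congr
      intro t ht
      rw [Set.uIcc_of_le hax] at ht
      show |t - x| = x - t
      rw [abs_of_nonpos (by linarith [ht.2])]; ring
    have e2 : (∫ t in x..b, |t - x|) = ∫ t in x..b, (t - x) := by
      apply intervalIntegral.integral_congr
      intro t ht
      rw [Set.uIcc_of_le hxb] at ht
      show |t - x| = t - x
      rw [abs_of_nonneg (by linarith [ht.1])]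
    have hid : ∀ c d : ℝ, (∫ t in c..d, (t - x)) = (d ^ 2 - c ^ 2) / 2 - x * (d - c) := by
      intro c d
      rw [intervalIntegral.integral_sub (Continuous.intervalIntegrable (by continuity) c d)
        intervalIntegrable_const, integral_id, intervalIntegral.integral_const]
      simp [smul_eq_mul]
      ring
    have hneg : (∫ t in a..x, (x - t)) = -∫ t in a..x, (t - x) := by
      rw [← intervalIntegral.integral_neg]
      apply intervalIntegral.integral_congr
      intro t _; ring
    rw [e1, e2, hneg, hid a x, hid x b]
    ring
  have hfinal : (∫ t in a..b, M * |t - x|) = M * ((x - a)^2 / 2 + (b - x)^2 / 2) := by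
    rw [intervalIntegral.integral_const_mul, hsplit]
  calc |∫ t in a..b, (f t - f x)| ≤ ∫ t in a..b, M * |t - x| := habs.trans hmono
    _ = ((b - a) ^ 2 / 4 + (x - (a + b) / 2) ^ 2) * M := by rw [hfinal]; ring
end

section
/- For every real constant c < 1/4 there exist real numbers a < b, a function f : ℝ → ℝ continuous on [a,b] and differentiable on (a,b) with |f'(t)| ≤ M for all t ∈ (a,b) for some M > 0, and a point x ∈ [a,b], such that |∫_a^b f(t) dt − f(x)·(b−a)| > (c·(b−a)² + (x − (a+b)/2)²)·M. (For instance f(t) = t and x = a give left-hand side (b−a)²/2 and right-hand side (c + 1/4)(b−a)² with M = 1.) -/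
/-- Sharpness of the constant 1/4 in the classical Ostrowski inequality. -/
theorem ostrowski_classical_sharp (c : ℝ) (hc : c < 1 / 4) :
    ∃ (a b M x : ℝ) (f f' : ℝ → ℝ),
      a < b ∧
      ContinuousOn f (Set.Icc a b) ∧
      (∀ t ∈ Set.Ioo a b, HasDerivAt f (f' t) t) ∧
      0 < M ∧
      (∀ t ∈ Set.Ioo a b, |f' t| ≤ M) ∧
      x ∈ Set.Icc a b ∧
      |(∫ t in a..b, f t) - f x * (b - a)| >
        (c * (b - a) ^ 2 + (x - (a + b) / 2) ^ 2) * M := by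
  refine ⟨0, 1, 1, 0, id, fun _ => 1, one_pos, continuousOn_id,
    fun t _ => hasDerivAt_id t, one_pos, fun t _ => by norm_num, by norm_num, ?_⟩
  have : (∫ t in (0:ℝ)..1, t) = 1 / 2 := by
    simp [integral_id]
  simp only [id]
  rw [this]
  rw [abs_of_pos (by norm_num)]
  nlinarith
end

section
/- Let n ≥ 1 and k ≥ 1 be integers, let 0 = j₀ < j₁ < ⋯ < j_{k−1} < j_k = n be integers, and let p₀, p₁, …, p_{k+1} be integers with p₀ = 0, p_{k+1} = n, and p_i ∈ [j_{i−1}, j_i] for i = 1, …, k. Let (x_j)_{j=0}^{n} be real numbers and let M ≥ 0 satisfy |x_{j+1} − x_j| ≤ M for all 0 ≤ j ≤ n−1. Then |∑_{j=1}^{n} x_j − ∑_{i=0}^{k} (p_{i+1} − p_i)·x_{j_i}| ≤ M·( (1/4)·∑_{i=0}^{k−1} (j_{i+1} − j_i)² + ∑_{i=0}^{k−1} (p_{i+1} − (j_i + j_{i+1})/2)² + ∑_{i=0}^{k−1} (p_{i+1} − (j_i + j_{i+1})/2) ). -/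
open Finset

-- telescoping bound
lemma tele (x : ℕ → ℝ) (M : ℝ) (a : ℕ) :
    ∀ m, a ≤ m → (∀ i, a ≤ i → i < m → |x (i + 1) - x i| ≤ M) →
      |x m - x a| ≤ M * ((m : ℝ) - a) := by
  intro m hm
  induction m, hm using Nat.le_induction with
  | base => intro _; simp
  | succ m hm ih =>
    intro h
    have h1 := ih (fun i hi him => h i hi (by omega))
    have h2 := h m hm (by omega)
    have : |x (m + 1) - x a| ≤ |x (m + 1) - x m| + |x m - x a| := by
      have := abs_add_le (x (m + 1) - x m) (x m - x a); simpa using this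
    push_cast
    nlinarith [this]

lemma gauss1 (a : ℕ) : ∀ p, a ≤ p →
    (∑ m ∈ Ioc a p, ((m : ℝ) - a)) = ((p : ℝ) - a) * ((p : ℝ) - a + 1) / 2 := by
  intro p hp
  induction p, hp using Nat.le_induction with
  | base => simp
  | succ p hp ih =>
    rw [Finset.sum_Ioc_succ_top hp, ih]
    push_cast; ring

lemma gauss2 (pp : ℕ) : ∀ J, pp ≤ J →
    (∑ m ∈ Ioc pp J, ((J : ℝ) - m)) = ((J : ℝ) - pp) * ((J : ℝ) - pp - 1) / 2 := by
  intro J hJ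
  induction J, hJ using Nat.le_induction with
  | base => simp
  | succ J hJ ih =>
    rw [Finset.sum_Ioc_succ_top hJ]
    have : (∑ m ∈ Ioc pp J, (((J : ℝ) + 1) - m)) =
        (∑ m ∈ Ioc pp J, ((J : ℝ) - m)) + ((Ioc pp J).card : ℝ) := by
      rw [Finset.card_eq_sum_ones]
      push_cast
      rw [← Finset.sum_add_distrib]
      exact Finset.sum_congr rfl (fun _ _ => by ring)
    push_cast [this, ih, Nat.card_Ioc, Nat.cast_sub hJ]
    ring

lemma interval_bound (x : ℕ → ℝ) (M : ℝ) (a pp J : ℕ)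
    (hap : a ≤ pp) (hpJ : pp ≤ J)
    (h : ∀ i, a ≤ i → i < J → |x (i + 1) - x i| ≤ M) :
    |(∑ m ∈ Ioc a J, x m) - (((pp : ℝ) - a) * x a + ((J : ℝ) - pp) * x J)| ≤
      M * (((pp : ℝ) - a) * ((pp : ℝ) - a + 1) / 2 +
        ((J : ℝ) - pp) * ((J : ℝ) - pp - 1) / 2) := by
  have hsplit := Finset.sum_Ioc_consecutive x hap hpJ
  have e1 : (∑ m ∈ Ioc a pp, x m) - ((pp : ℝ) - a) * x a
      = ∑ m ∈ Ioc a pp, (x m - x a) := by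
    rw [Finset.sum_sub_distrib, Finset.sum_const, Nat.card_Ioc, nsmul_eq_mul,
      Nat.cast_sub hap]
  have e2 : (∑ m ∈ Ioc pp J, x m) - ((J : ℝ) - pp) * x J
      = ∑ m ∈ Ioc pp J, (x m - x J) := by
    rw [Finset.sum_sub_distrib, Finset.sum_const, Nat.card_Ioc, nsmul_eq_mul,
      Nat.cast_sub hpJ]
  have b1 : |∑ m ∈ Ioc a pp, (x m - x a)| ≤ M * (((pp:ℝ) - a) * ((pp:ℝ) - a + 1) / 2) := by
    calc |∑ m ∈ Ioc a pp, (x m - x a)| ≤ ∑ m ∈ Ioc a pp, |x m - x a| :=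
          Finset.abs_sum_le_sum_abs _ _
      _ ≤ ∑ m ∈ Ioc a pp, M * ((m : ℝ) - a) := by
          refine Finset.sum_le_sum fun m hm => ?_
          rw [Finset.mem_Ioc] at hm
          exact tele x M a m (le_of_lt hm.1) (fun i hi him => h i hi (by omega))
      _ = M * (((pp:ℝ) - a) * ((pp:ℝ) - a + 1) / 2) := by
          rw [← Finset.mul_sum, gauss1 a pp hap]
  have b2 : |∑ m ∈ Ioc pp J, (x m - x J)| ≤ M * (((J:ℝ) - pp) * ((J:ℝ) - pp - 1) / 2) := by
    calc |∑ m ∈ Ioc pp J, (x m - x J)| ≤ ∑ m ∈ Ioc pp J, |x m - x J| :=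
          Finset.abs_sum_le_sum_abs _ _
      _ ≤ ∑ m ∈ Ioc pp J, M * ((J : ℝ) - m) := by
          refine Finset.sum_le_sum fun m hm => ?_
          rw [Finset.mem_Ioc] at hm
          have : |x m - x J| = |x J - x m| := abs_sub_comm _ _
          rw [this]
          exact tele x M m J hm.2 (fun i hi him => h i (by omega) him)
      _ = M * (((J:ℝ) - pp) * ((J:ℝ) - pp - 1) / 2) := by
          rw [← Finset.mul_sum, gauss2 pp J hpJ]
  have key : (∑ m ∈ Ioc a J, x m) - (((pp : ℝ) - a) * x a + ((J : ℝ) - pp) * x J)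
      = (∑ m ∈ Ioc a pp, (x m - x a)) + (∑ m ∈ Ioc pp J, (x m - x J)) := by
    rw [← e1, ← e2, ← hsplit]; ring
  rw [key]
  exact (abs_add_le _ _).trans (by linarith)

/-- Discrete case of the generalized Ostrowski inequality for k points. -/
theorem generalized_ostrowski_discrete (n k : ℕ) (hn : 1 ≤ n) (hk : 1 ≤ k)
    (j p : ℕ → ℕ) (hj0 : j 0 = 0) (hjk : j k = n)
    (hmono : ∀ i < k, j i < j (i + 1))
    (hp0 : p 0 = 0) (hpk : p (k + 1) = n)
    (hp : ∀ i < k, j i ≤ p (i + 1) ∧ p (i + 1) ≤ j (i + 1))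
    (x : ℕ → ℝ) (M : ℝ) (hM : 0 ≤ M)
    (hbound : ∀ i < n, |x (i + 1) - x i| ≤ M) :
    |(∑ m ∈ Finset.Icc 1 n, x m) -
        ∑ i ∈ Finset.range (k + 1), ((p (i + 1) : ℝ) - (p i : ℝ)) * x (j i)| ≤
      M * ((1 / 4) * ∑ i ∈ Finset.range k, ((j (i + 1) : ℝ) - (j i : ℝ)) ^ 2 +
        ∑ i ∈ Finset.range k, ((p (i + 1) : ℝ) - ((j i : ℝ) + (j (i + 1) : ℝ)) / 2) ^ 2 +
        ∑ i ∈ Finset.range k, ((p (i + 1) : ℝ) - ((j i : ℝ) + (j (i + 1) : ℝ)) / 2)) := by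
  have mono : ∀ a b, a ≤ b → b ≤ k → j a ≤ j b := by
    intro a b hab
    induction b, hab using Nat.le_induction with
    | base => intro _; exact le_rfl
    | succ b hb ih =>
      intro hbk
      exact le_trans (ih (by omega)) (le_of_lt (hmono b (by omega)))
  -- Step A/B: sum split over intervals
  have hIcc : Finset.Icc 1 n = Finset.Ioc 0 n := by
    ext m; simp [Finset.mem_Icc, Finset.mem_Ioc]; omega
  have split : ∀ t, t ≤ k →
      (∑ m ∈ Finset.Ioc (j 0) (j t), x m) =
        ∑ i ∈ Finset.range t, ∑ m ∈ Finset.Ioc (j i) (j (i + 1)), x m := by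
    intro t
    induction t with
    | zero => simp
    | succ t ih =>
      intro ht
      rw [Finset.sum_range_succ, ← ih (by omega),
        Finset.sum_Ioc_consecutive x (mono 0 t (by omega) (by omega))
          (le_of_lt (hmono t (by omega)))]
  -- Step C: rewrite weighted sum
  have wsum : (∑ i ∈ Finset.range (k + 1), ((p (i + 1) : ℝ) - (p i : ℝ)) * x (j i)) =
      ∑ i ∈ Finset.range k, (((p (i + 1) : ℝ) - (j i : ℝ)) * x (j i) +
        ((j (i + 1) : ℝ) - (p (i + 1) : ℝ)) * x (j (i + 1))) := by
    have expand : (∑ i ∈ Finset.range (k + 1), ((p (i + 1) : ℝ) - (p i : ℝ)) * x (j i)) =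
        (∑ i ∈ Finset.range (k + 1), ((p (i + 1) : ℝ) - (j i : ℝ)) * x (j i)) +
        ∑ i ∈ Finset.range (k + 1), ((j i : ℝ) - (p i : ℝ)) * x (j i) := by
      rw [← Finset.sum_add_distrib]
      exact Finset.sum_congr rfl (fun _ _ => by ring)
    rw [expand, Finset.sum_range_succ, Finset.sum_range_succ', hjk, hpk, hj0, hp0]
    simp [Finset.sum_add_distrib]
  -- Assemble
  have eq1 : (∑ m ∈ Finset.Ioc 0 n, x m) =
      ∑ i ∈ Finset.range k, ∑ m ∈ Finset.Ioc (j i) (j (i + 1)), x m := by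
    have := split k le_rfl
    rwa [hj0, hjk] at this
  rw [hIcc, eq1, wsum, ← Finset.sum_sub_distrib]
  have bound : ∀ i ∈ Finset.range k,
      |(∑ m ∈ Finset.Ioc (j i) (j (i + 1)), x m) -
        (((p (i + 1) : ℝ) - (j i : ℝ)) * x (j i) +
          ((j (i + 1) : ℝ) - (p (i + 1) : ℝ)) * x (j (i + 1)))| ≤
        M * (((p (i+1) : ℝ) - (j i)) * ((p (i+1) : ℝ) - (j i) + 1) / 2 +
          ((j (i+1) : ℝ) - (p (i+1))) * ((j (i+1) : ℝ) - (p (i+1)) - 1) / 2) := by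
    intro i hi
    rw [Finset.mem_range] at hi
    have hji : j (i + 1) ≤ n := by rw [← hjk]; exact mono (i + 1) k (by omega) le_rfl
    exact interval_bound x M (j i) (p (i + 1)) (j (i + 1)) (hp i hi).1 (hp i hi).2
      (fun m _ hm => hbound m (by omega))
  calc |∑ i ∈ Finset.range k, _| ≤ ∑ i ∈ Finset.range k, _ :=
        Finset.abs_sum_le_sum_abs _ _
    _ ≤ ∑ i ∈ Finset.range k,
        M * (((p (i+1) : ℝ) - (j i)) * ((p (i+1) : ℝ) - (j i) + 1) / 2 +
          ((j (i+1) : ℝ) - (p (i+1))) * ((j (i+1) : ℝ) - (p (i+1)) - 1) / 2) :=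
        Finset.sum_le_sum bound
    _ = _ := by
        rw [Finset.mul_sum, ← Finset.sum_add_distrib, ← Finset.sum_add_distrib,
          Finset.mul_sum]
        exact Finset.sum_congr rfl (fun i _ => by ring)
end

section
/- Let q > 1 be a real number, let m < n be natural numbers, let k ≥ 1 be an integer, let m = j₀ < j₁ < ⋯ < j_{k−1} < j_k = n be natural numbers, and let p₀, p₁, …, p_{k+1} be natural numbers with p₀ = m, p_{k+1} = n, and p_i ∈ [j_{i−1}, j_i] for i = 1, …, k. Let f : ℝ → ℝ and let M ≥ 0 satisfy |f(q^{j+1}) − f(q^j)| ≤ M·(q−1)·q^j for all m ≤ j ≤ n−1. Define h₂(t,s) = (t − s)(t − q·s)/(1 + q). Then |∑_{j=m}^{n−1} (q^{j+1} − q^j)·f(q^{j+1}) − ∑_{i=0}^{k} (q^{p_{i+1}} − q^{p_i})·f(q^{j_i})| ≤ M·∑_{i=0}^{k−1} ( h₂(q^{j_i}, q^{p_{i+1}}) + h₂(q^{j_{i+1}}, q^{p_{i+1}}) ). -/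
/-- `h₂(t,s) = (t-s)(t-qs)/(1+q)` for the time scale `qᴺ`. -/
noncomputable def qh2 (q t s : ℝ) : ℝ := (t - s) * (t - q * s) / (1 + q)

lemma chain_le (g : ℕ → ℕ) (K : ℕ) (h : ∀ i < K, g i ≤ g (i+1)) :
    ∀ a b, a ≤ b → b ≤ K → g a ≤ g b := by
  intro a b hab hbK
  induction b with
  | zero =>
    obtain rfl : a = 0 := Nat.le_zero.mp hab
    exact le_rfl
  | succ b ih =>
    rcases Nat.eq_or_lt_of_le hab with rfl | hlt
    · exact le_rfl
    · exact (ih (by omega) (by omega)).trans (h b (by omega))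

lemma geo_sum (q : ℝ) (a : ℕ) : ∀ b, a ≤ b →
    ∑ l ∈ Finset.Ico a b, (q^(l+1) - q^l) = q^b - q^a := by
  intro b hb
  induction b, hb using Nat.le_induction with
  | base => simp
  | succ b hb ih => rw [Finset.sum_Ico_succ_top hb, ih]; ring

lemma sum_pieces (F : ℕ → ℝ) (g : ℕ → ℕ) :
    ∀ K, (∀ i < K, g i ≤ g (i+1)) →
    ∑ i ∈ Finset.range K, ∑ l ∈ Finset.Ico (g i) (g (i+1)), F l
      = ∑ l ∈ Finset.Ico (g 0) (g K), F l := by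
  intro K
  induction K with
  | zero => simp
  | succ K ih =>
    intro h
    rw [Finset.sum_range_succ, ih (fun i hi => h i (by omega)),
      Finset.sum_Ico_consecutive _ (chain_le g (K+1) h 0 K (by omega) (by omega))
        (h K (by omega))]

lemma sumL1 (q : ℝ) (hq : 1 < q) (a : ℕ) : ∀ b, a ≤ b →
    ∑ l ∈ Finset.Ico a b, (q^(l+1) - q^l) * (q^(l+1) - q^a) = qh2 q (q^a) (q^b) := by
  have h1 : (1:ℝ) + q ≠ 0 := by nlinarith
  intro b hb
  induction b, hb using Nat.le_induction with
  | base => simp [qh2]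
  | succ b hb ih =>
    rw [Finset.sum_Ico_succ_top hb, ih]
    unfold qh2
    field_simp
    ring

lemma sumL2 (q : ℝ) (hq : 1 < q) (a b : ℕ) (hb : a ≤ b) :
    ∑ l ∈ Finset.Ico a b, (q^(l+1) - q^l) * (q^b - q^(l+1)) = qh2 q (q^b) (q^a) := by
  have h1 : (1:ℝ) + q ≠ 0 := by nlinarith
  have key : ∑ l ∈ Finset.Ico a b, (q^(l+1) - q^l) * (q^b - q^(l+1))
      = (∑ l ∈ Finset.Ico a b, (q^(l+1) - q^l)) * (q^b - q^a)
        - ∑ l ∈ Finset.Ico a b, (q^(l+1) - q^l) * (q^(l+1) - q^a) := by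
    rw [Finset.sum_mul, ← Finset.sum_sub_distrib]
    exact Finset.sum_congr rfl fun l _ => by ring
  rw [key, geo_sum q a b hb, sumL1 q hq a b hb]
  unfold qh2
  field_simp
  ring

lemma fdiff (q : ℝ) (hq : 1 < q) (m n : ℕ) (f : ℝ → ℝ) (M : ℝ)
    (hbound : ∀ l, m ≤ l → l < n → |f (q ^ (l + 1)) - f (q ^ l)| ≤ M * (q - 1) * q ^ l)
    (a : ℕ) (hma : m ≤ a) : ∀ b, a ≤ b → b ≤ n →
    |f (q^b) - f (q^a)| ≤ M * (q^b - q^a) := by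
  intro b hab
  induction b, hab using Nat.le_induction with
  | base => intro; simp
  | succ b hb ih =>
    intro hbn
    have h1 := hbound b (le_trans hma hb) (by omega)
    have h2 := ih (by omega)
    have h3 : |f (q^(b+1)) - f (q^a)| ≤ |f (q^(b+1)) - f (q^b)| + |f (q^b) - f (q^a)| :=
      abs_sub_le _ _ _
    have h4 : M * (q - 1) * q ^ b + M * (q^b - q^a) = M * (q^(b+1) - q^a) := by
      rw [pow_succ]; ring
    linarith

lemma piece (q : ℝ) (hq : 1 < q) (m n : ℕ) (f : ℝ → ℝ) (M : ℝ) (hM : 0 ≤ M)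
    (hbound : ∀ l, m ≤ l → l < n → |f (q ^ (l + 1)) - f (q ^ l)| ≤ M * (q - 1) * q ^ l)
    (a c b : ℕ) (hma : m ≤ a) (hac : a ≤ c) (hcb : c ≤ b) (hbn : b ≤ n) :
    |∑ l ∈ Finset.Ico a b, (q^(l+1) - q^l) * (f (q^(l+1)) - f (q^c))|
      ≤ M * (qh2 q (q^c) (q^a) + qh2 q (q^c) (q^b)) := by
  have hq0 : (0:ℝ) < q := by linarith
  have hpow : ∀ u v : ℕ, u ≤ v → q^u ≤ q^v := fun u v h => pow_le_pow_right₀ hq.le h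
  rw [← Finset.sum_Ico_consecutive _ hac hcb]
  calc |(∑ l ∈ Finset.Ico a c, (q^(l+1) - q^l) * (f (q^(l+1)) - f (q^c)))
        + ∑ l ∈ Finset.Ico c b, (q^(l+1) - q^l) * (f (q^(l+1)) - f (q^c))|
      ≤ |∑ l ∈ Finset.Ico a c, (q^(l+1) - q^l) * (f (q^(l+1)) - f (q^c))|
        + |∑ l ∈ Finset.Ico c b, (q^(l+1) - q^l) * (f (q^(l+1)) - f (q^c))| := abs_add_le _ _
    _ ≤ (∑ l ∈ Finset.Ico a c, M * ((q^(l+1) - q^l) * (q^c - q^(l+1))))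
        + ∑ l ∈ Finset.Ico c b, M * ((q^(l+1) - q^l) * (q^(l+1) - q^c)) := by
        gcongr with X Y
        · calc |∑ l ∈ Finset.Ico a c, (q^(l+1) - q^l) * (f (q^(l+1)) - f (q^c))|
              ≤ ∑ l ∈ Finset.Ico a c, |(q^(l+1) - q^l) * (f (q^(l+1)) - f (q^c))| :=
                Finset.abs_sum_le_sum_abs _ _
            _ ≤ ∑ l ∈ Finset.Ico a c, M * ((q^(l+1) - q^l) * (q^c - q^(l+1))) := by
                apply Finset.sum_le_sum
                intro l hl
                rw [Finset.mem_Ico] at hl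
                have hd : (0:ℝ) ≤ q^(l+1) - q^l := by
                  have := hpow l (l+1) (by omega); linarith
                have hfb : |f (q^c) - f (q^(l+1))| ≤ M * (q^c - q^(l+1)) :=
                  fdiff q hq m n f M hbound (l+1) (by omega) c (by omega) (by omega)
                rw [abs_mul, abs_of_nonneg hd, abs_sub_comm]
                calc (q^(l+1) - q^l) * |f (q^c) - f (q^(l+1))|
                    ≤ (q^(l+1) - q^l) * (M * (q^c - q^(l+1))) := by
                      exact mul_le_mul_of_nonneg_left hfb hd
                  _ = M * ((q^(l+1) - q^l) * (q^c - q^(l+1))) := by ring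
        · calc |∑ l ∈ Finset.Ico c b, (q^(l+1) - q^l) * (f (q^(l+1)) - f (q^c))|
              ≤ ∑ l ∈ Finset.Ico c b, |(q^(l+1) - q^l) * (f (q^(l+1)) - f (q^c))| :=
                Finset.abs_sum_le_sum_abs _ _
            _ ≤ ∑ l ∈ Finset.Ico c b, M * ((q^(l+1) - q^l) * (q^(l+1) - q^c)) := by
                apply Finset.sum_le_sum
                intro l hl
                rw [Finset.mem_Ico] at hl
                have hd : (0:ℝ) ≤ q^(l+1) - q^l := by
                  have := hpow l (l+1) (by omega); linarith
                have hfb : |f (q^(l+1)) - f (q^c)| ≤ M * (q^(l+1) - q^c) :=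
                  fdiff q hq m n f M hbound c (by omega) (l+1) (by omega) (by omega)
                rw [abs_mul, abs_of_nonneg hd]
                calc (q^(l+1) - q^l) * |f (q^(l+1)) - f (q^c)|
                    ≤ (q^(l+1) - q^l) * (M * (q^(l+1) - q^c)) :=
                      mul_le_mul_of_nonneg_left hfb hd
                  _ = M * ((q^(l+1) - q^l) * (q^(l+1) - q^c)) := by ring
    _ = M * (qh2 q (q^c) (q^a) + qh2 q (q^c) (q^b)) := by
        rw [← Finset.mul_sum, ← Finset.mul_sum, ← mul_add]
        congr 1
        rw [sumL2 q hq a c hac, sumL1 q hq c b hcb]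


/-- Quantum calculus case of the generalized Ostrowski inequality for k points. -/
theorem generalized_ostrowski_quantum (q : ℝ) (hq : 1 < q) (m n : ℕ) (hmn : m < n)
    (k : ℕ) (hk : 1 ≤ k)
    (j p : ℕ → ℕ) (hj0 : j 0 = m) (hjk : j k = n)
    (hmono : ∀ i < k, j i < j (i + 1))
    (hp0 : p 0 = m) (hpk : p (k + 1) = n)
    (hp : ∀ i < k, j i ≤ p (i + 1) ∧ p (i + 1) ≤ j (i + 1))
    (f : ℝ → ℝ) (M : ℝ) (hM : 0 ≤ M)
    (hbound : ∀ l, m ≤ l → l < n → |f (q ^ (l + 1)) - f (q ^ l)| ≤ M * (q - 1) * q ^ l) :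
    |(∑ l ∈ Finset.Ico m n, (q ^ (l + 1) - q ^ l) * f (q ^ (l + 1))) -
        ∑ i ∈ Finset.range (k + 1), (q ^ p (i + 1) - q ^ p i) * f (q ^ j i)| ≤
      M * ∑ i ∈ Finset.range k,
        (qh2 q (q ^ j i) (q ^ p (i + 1)) + qh2 q (q ^ j (i + 1)) (q ^ p (i + 1))) := by
  have hpm : ∀ i ≤ k, p i ≤ j i ∧ j i ≤ p (i + 1) := by
    intro i hik
    constructor
    · rcases Nat.eq_zero_or_pos i with rfl | hi
      · omega
      · obtain ⟨i', rfl⟩ : ∃ i', i = i' + 1 := ⟨i - 1, by omega⟩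
        exact (hp i' (by omega)).2
    · rcases Nat.lt_or_ge i k with h | h
      · exact (hp i h).1
      · have : i = k := by omega
        subst this
        omega
  have hpmono : ∀ i < k + 1, p i ≤ p (i + 1) := fun i hi =>
    ((hpm i (by omega)).1).trans (hpm i (by omega)).2
  have hpchain := chain_le p (k + 1) hpmono
  have hmp : ∀ i, i ≤ k + 1 → m ≤ p i := by
    intro i hi
    have := hpchain 0 i (by omega) hi
    omega
  have hpn : ∀ i, i ≤ k + 1 → p i ≤ n := by
    intro i hi
    have := hpchain i (k + 1) hi le_rfl
    omega
  have hsplit := sum_pieces (fun l => (q ^ (l + 1) - q ^ l) * f (q ^ (l + 1))) p (k + 1) hpmono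
  rw [hp0, hpk] at hsplit
  rw [← hsplit, ← Finset.sum_sub_distrib]
  have hpiece : ∀ i ∈ Finset.range (k + 1),
      (∑ l ∈ Finset.Ico (p i) (p (i + 1)), (q ^ (l + 1) - q ^ l) * f (q ^ (l + 1)))
        - (q ^ p (i + 1) - q ^ p i) * f (q ^ j i)
      = ∑ l ∈ Finset.Ico (p i) (p (i + 1)),
          (q ^ (l + 1) - q ^ l) * (f (q ^ (l + 1)) - f (q ^ j i)) := by
    intro i hi
    rw [Finset.mem_range] at hi
    rw [← geo_sum q (p i) (p (i + 1)) (hpmono i hi), Finset.sum_mul,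
      ← Finset.sum_sub_distrib]
    exact Finset.sum_congr rfl fun l _ => by ring
  rw [Finset.sum_congr rfl hpiece]
  calc |∑ i ∈ Finset.range (k + 1), ∑ l ∈ Finset.Ico (p i) (p (i + 1)),
          (q ^ (l + 1) - q ^ l) * (f (q ^ (l + 1)) - f (q ^ j i))|
      ≤ ∑ i ∈ Finset.range (k + 1), |∑ l ∈ Finset.Ico (p i) (p (i + 1)),
          (q ^ (l + 1) - q ^ l) * (f (q ^ (l + 1)) - f (q ^ j i))| :=
        Finset.abs_sum_le_sum_abs _ _
    _ ≤ ∑ i ∈ Finset.range (k + 1),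
          M * (qh2 q (q ^ j i) (q ^ p i) + qh2 q (q ^ j i) (q ^ p (i + 1))) := by
        apply Finset.sum_le_sum
        intro i hi
        rw [Finset.mem_range] at hi
        exact piece q hq m n f M hM hbound (p i) (j i) (p (i + 1))
          (hmp i (by omega)) (hpm i (by omega)).1 (hpm i (by omega)).2 (hpn (i + 1) (by omega))
    _ = M * ∑ i ∈ Finset.range k,
          (qh2 q (q ^ j i) (q ^ p (i + 1)) + qh2 q (q ^ j (i + 1)) (q ^ p (i + 1))) := by
        rw [← Finset.mul_sum]
        congr 1
        have hA0 : qh2 q (q ^ j 0) (q ^ p 0) = 0 := by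
          rw [hj0, hp0, qh2, sub_self, zero_mul, zero_div]
        have hBk : qh2 q (q ^ j k) (q ^ p (k + 1)) = 0 := by
          rw [hjk, hpk, qh2, sub_self, zero_mul, zero_div]
        rw [Finset.sum_add_distrib, Finset.sum_add_distrib,
          Finset.sum_range_succ', Finset.sum_range_succ, hA0, hBk, add_zero, add_zero,
          add_comm]
end

section
/- Let a < b be real numbers and α ∈ [a,b]. Let f : ℝ → ℝ be continuous on [a,b] and differentiable on (a,b), and let M ≥ 0 satisfy |f'(t)| ≤ M for all t ∈ (a,b). Then |∫_a^b f(t) dt − ((α − a)·f(a) + (b − α)·f(b))| ≤ M·((α − a)² + (b − α)²)/2. -/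
/-- Rectangle inequality (continuous case). -/
theorem rectangle_inequality (a b α M : ℝ) (hab : a < b) (hα : α ∈ Set.Icc a b)
    (f f' : ℝ → ℝ)
    (hcont : ContinuousOn f (Set.Icc a b))
    (hderiv : ∀ t ∈ Set.Ioo a b, HasDerivAt f (f' t) t)
    (hM : 0 ≤ M) (hbound : ∀ t ∈ Set.Ioo a b, |f' t| ≤ M) :
    |(∫ t in a..b, f t) - ((α - a) * f a + (b - α) * f b)| ≤
      M * ((α - a) ^ 2 + (b - α) ^ 2) / 2 := by
  obtain ⟨haα, hαb⟩ := hα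
  -- Lipschitz bound
  have lip : ∀ x ∈ Set.Icc a b, ∀ y ∈ Set.Icc a b, x ≤ y → |f y - f x| ≤ M * (y - x) := by
    intro x hx y hy hxy
    rcases eq_or_lt_of_le hxy with rfl | hlt
    · simp
    · obtain ⟨c, hc, hc'⟩ := exists_hasDerivAt_eq_slope f f' hlt
        (hcont.mono (Set.Icc_subset_Icc hx.1 hy.2))
        (fun t ht => hderiv t ⟨lt_of_le_of_lt hx.1 ht.1, lt_of_lt_of_le ht.2 hy.2⟩)
      have hcm : c ∈ Set.Ioo a b := ⟨lt_of_le_of_lt hx.1 hc.1, lt_of_lt_of_le hc.2 hy.2⟩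
      have : f y - f x = f' c * (y - x) := by
        rw [hc', div_mul_cancel₀ _ (sub_ne_zero.2 (ne_of_gt hlt))]
      rw [this, abs_mul, abs_of_nonneg (by linarith : (0:ℝ) ≤ y - x)]
      exact mul_le_mul_of_nonneg_right (hbound c hcm) (by linarith)
  have int1 : IntervalIntegrable f MeasureTheory.volume a α :=
    (hcont.mono (by rw [Set.uIcc_of_le haα]; exact Set.Icc_subset_Icc le_rfl hαb)).intervalIntegrable
  have int2 : IntervalIntegrable f MeasureTheory.volume α b :=
    (hcont.mono (by rw [Set.uIcc_of_le hαb]; exact Set.Icc_subset_Icc haα le_rfl)).intervalIntegrable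
  have intc1 : IntervalIntegrable (fun _ : ℝ => f a) MeasureTheory.volume a α := intervalIntegrable_const
  have intc2 : IntervalIntegrable (fun _ : ℝ => f b) MeasureTheory.volume α b := intervalIntegrable_const
  have split : (∫ t in a..b, f t) = (∫ t in a..α, f t) + ∫ t in α..b, f t :=
    (intervalIntegral.integral_add_adjacent_intervals int1 int2).symm
  have e1 : (∫ t in a..α, f t) - (α - a) * f a = ∫ t in a..α, (f t - f a) := by
    rw [intervalIntegral.integral_sub int1 intc1, intervalIntegral.integral_const, smul_eq_mul]
  have e2 : (∫ t in α..b, f t) - (b - α) * f b = ∫ t in α..b, (f t - f b) := by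
    rw [intervalIntegral.integral_sub int2 intc2, intervalIntegral.integral_const, smul_eq_mul]
  have lin1 : (∫ t in a..α, M * (t - a)) = M * (α - a) ^ 2 / 2 := by
    rw [intervalIntegral.integral_const_mul]
    have : (∫ t in a..α, (t - a)) = (α - a)^2/2 := by
      have h1 : (∫ t in a..α, (t - a)) = (∫ t in a..α, t) - ∫ _t in a..α, (a:ℝ) :=
        intervalIntegral.integral_sub (continuous_id.intervalIntegrable _ _)
          intervalIntegrable_const
      rw [h1, integral_id, intervalIntegral.integral_const, smul_eq_mul]
      ring
    rw [this]; ring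
  have lin2 : (∫ t in α..b, M * (b - t)) = M * (b - α) ^ 2 / 2 := by
    rw [intervalIntegral.integral_const_mul]
    have : (∫ t in α..b, (b - t)) = (b - α)^2/2 := by
      have h1 : (∫ t in α..b, (b - t)) = (∫ _t in α..b, (b:ℝ)) - ∫ t in α..b, t :=
        intervalIntegral.integral_sub intervalIntegrable_const
          (continuous_id.intervalIntegrable _ _)
      rw [h1, integral_id, intervalIntegral.integral_const, smul_eq_mul]
      ring
    rw [this]; ring
  have b1 : |∫ t in a..α, (f t - f a)| ≤ M * (α - a) ^ 2 / 2 := by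
    rw [← lin1]
    calc |∫ t in a..α, (f t - f a)| ≤ ∫ t in a..α, |f t - f a| := by
          simpa using intervalIntegral.norm_integral_le_integral_norm (f := fun t => f t - f a) haα
      _ ≤ ∫ t in a..α, M * (t - a) := by
          apply intervalIntegral.integral_mono_on haα ((int1.sub intc1).abs)
            (by apply Continuous.intervalIntegrable; continuity)
          intro t ht
          exact lip a ⟨le_rfl, hab.le⟩ t ⟨ht.1, ht.2.trans hαb⟩ ht.1
  have b2 : |∫ t in α..b, (f t - f b)| ≤ M * (b - α) ^ 2 / 2 := by
    rw [← lin2]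
    calc |∫ t in α..b, (f t - f b)| ≤ ∫ t in α..b, |f t - f b| := by
          simpa using intervalIntegral.norm_integral_le_integral_norm (f := fun t => f t - f b) hαb
      _ ≤ ∫ t in α..b, M * (b - t) := by
          apply intervalIntegral.integral_mono_on hαb ((int2.sub intc2).abs)
            (by apply Continuous.intervalIntegrable; continuity)
          intro t ht
          rw [abs_sub_comm]
          exact lip t ⟨haα.trans ht.1, ht.2⟩ b ⟨hab.le, le_rfl⟩ ht.2
  calc |(∫ t in a..b, f t) - ((α - a) * f a + (b - α) * f b)|
      = |(∫ t in a..α, (f t - f a)) + ∫ t in α..b, (f t - f b)| := by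
        rw [← e1, ← e2, split]; ring_nf
    _ ≤ |∫ t in a..α, (f t - f a)| + |∫ t in α..b, (f t - f b)| := abs_add_le _ _
    _ ≤ M * (α - a) ^ 2 / 2 + M * (b - α) ^ 2 / 2 := add_le_add b1 b2
    _ = M * ((α - a) ^ 2 + (b - α) ^ 2) / 2 := by ring
end

section
/- Let a < b be real numbers. Let f : ℝ → ℝ be continuous on [a,b] and differentiable on (a,b), and let M ≥ 0 satisfy |f'(t)| ≤ M for all t ∈ (a,b). Then |∫_a^b f(t) dt − ((f(a) + f(b))/2)·(b − a)| ≤ M·(b − a)²/4. -/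
/-- Trapezoid inequality (continuous case). -/
theorem trapezoid_inequality (a b M : ℝ) (hab : a < b)
    (f f' : ℝ → ℝ)
    (hcont : ContinuousOn f (Set.Icc a b))
    (hderiv : ∀ t ∈ Set.Ioo a b, HasDerivAt f (f' t) t)
    (hM : 0 ≤ M) (hbound : ∀ t ∈ Set.Ioo a b, |f' t| ≤ M) :
    |(∫ t in a..b, f t) - (f a + f b) / 2 * (b - a)| ≤ M * (b - a) ^ 2 / 4 := by
  set m : ℝ := (a + b) / 2 with hm
  have ham : a ≤ m := by simp only [hm]; linarith
  have hmb : m ≤ b := by simp only [hm]; linarith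
  have hIcc : interior (Set.Icc a b) = Set.Ioo a b := interior_Icc
  have hdiff : DifferentiableOn ℝ f (interior (Set.Icc a b)) := by
    rw [hIcc]; exact fun t ht => ((hderiv t ht).differentiableAt).differentiableWithinAt
  have hderiv' : ∀ t ∈ interior (Set.Icc a b), deriv f t = f' t := by
    rw [hIcc]; exact fun t ht => (hderiv t ht).deriv
  -- Lipschitz-type bound
  have key : ∀ x ∈ Set.Icc a b, ∀ y ∈ Set.Icc a b, x ≤ y → |f y - f x| ≤ M * (y - x) := by
    intro x hx y hy hxy
    have hub : f y - f x ≤ M * (y - x) := by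
      apply (convex_Icc a b).image_sub_le_mul_sub_of_deriv_le hcont hdiff _ x hx y hy hxy
      intro t ht
      rw [hderiv' t ht]
      rw [hIcc] at ht
      exact (abs_le.1 (hbound t ht)).2
    have hlb : -M * (y - x) ≤ f y - f x := by
      apply (convex_Icc a b).mul_sub_le_image_sub_of_le_deriv hcont hdiff _ x hx y hy hxy
      intro t ht
      rw [hderiv' t ht]
      rw [hIcc] at ht
      exact (abs_le.1 (hbound t ht)).1
    rw [abs_le]; constructor <;> nlinarith
  -- integrability
  have hint : ∀ c d : ℝ, a ≤ c → c ≤ d → d ≤ b → IntervalIntegrable f MeasureTheory.volume c d := by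
    intro c d hac hcd hdb
    apply ContinuousOn.intervalIntegrable
    apply hcont.mono
    rw [Set.uIcc_of_le hcd]
    exact Set.Icc_subset_Icc hac hdb
  have hint1 := hint a m le_rfl ham hmb
  have hint2 := hint m b ham hmb le_rfl
  have c1 : Continuous fun t : ℝ => M * (t - a) := by continuity
  have c1n : Continuous fun t : ℝ => -(M * (t - a)) := by continuity
  have c2 : Continuous fun t : ℝ => M * (b - t) := by continuity
  have c2n : Continuous fun t : ℝ => -(M * (b - t)) := by continuity
  -- split the difference
  have hsplit : (∫ t in a..b, f t) - (f a + f b) / 2 * (b - a)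
      = (∫ t in a..m, (f t - f a)) + (∫ t in m..b, (f t - f b)) := by
    rw [intervalIntegral.integral_sub hint1 (intervalIntegrable_const),
        intervalIntegral.integral_sub hint2 (intervalIntegrable_const),
        intervalIntegral.integral_const, intervalIntegral.integral_const,
        ← intervalIntegral.integral_add_adjacent_intervals hint1 hint2]
    simp only [smul_eq_mul, hm]; ring
  rw [hsplit]
  -- bound each piece
  have bound1 : |∫ t in a..m, (f t - f a)| ≤ M * (b - a) ^ 2 / 8 := by
    have h1 : |∫ t in a..m, (f t - f a)| ≤ ∫ t in a..m, M * (t - a) := by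
      rw [abs_le]
      constructor
      · have hlow : (∫ t in a..m, -(M * (t - a))) ≤ ∫ t in a..m, (f t - f a) := by
          apply intervalIntegral.integral_mono_on ham (c1n.intervalIntegrable a m)
            (hint1.sub intervalIntegrable_const)
          intro t ht
          have := key a (Set.mem_Icc.2 ⟨le_rfl, hab.le⟩)
            t (Set.mem_Icc.2 ⟨ht.1, le_trans ht.2 hmb⟩) ht.1
          have h2 := (abs_le.1 this).1
          show -(M * (t - a)) ≤ f t - f a
          linarith
        rw [intervalIntegral.integral_neg] at hlow
        linarith
      · apply intervalIntegral.integral_mono_on ham (hint1.sub intervalIntegrable_const)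
          (c1.intervalIntegrable a m)
        intro t ht
        have := key a (Set.mem_Icc.2 ⟨le_rfl, hab.le⟩)
          t (Set.mem_Icc.2 ⟨ht.1, le_trans ht.2 hmb⟩) ht.1
        exact le_trans (le_abs_self _) this
    have h2 : (∫ t in a..m, M * (t - a)) = M * (b - a) ^ 2 / 8 := by
      rw [intervalIntegral.integral_const_mul, intervalIntegral.integral_sub
        intervalIntegral.intervalIntegrable_id intervalIntegrable_const,
        integral_id, intervalIntegral.integral_const]
      simp only [smul_eq_mul, hm]; ring
    linarith
  have bound2 : |∫ t in m..b, (f t - f b)| ≤ M * (b - a) ^ 2 / 8 := by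
    have h1 : |∫ t in m..b, (f t - f b)| ≤ ∫ t in m..b, M * (b - t) := by
      rw [abs_le]
      constructor
      · have hlow : (∫ t in m..b, -(M * (b - t))) ≤ ∫ t in m..b, (f t - f b) := by
          apply intervalIntegral.integral_mono_on hmb (c2n.intervalIntegrable m b)
            (hint2.sub intervalIntegrable_const)
          intro t ht
          have := key t (Set.mem_Icc.2 ⟨le_trans ham ht.1, ht.2⟩)
            b (Set.mem_Icc.2 ⟨le_trans ham hmb, le_rfl⟩) ht.2
          have h2 := (abs_le.1 this).2
          show -(M * (b - t)) ≤ f t - f b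
          linarith
        rw [intervalIntegral.integral_neg] at hlow
        linarith
      · apply intervalIntegral.integral_mono_on hmb (hint2.sub intervalIntegrable_const)
          (c2.intervalIntegrable m b)
        intro t ht
        have := key t (Set.mem_Icc.2 ⟨le_trans ham ht.1, ht.2⟩)
          b (Set.mem_Icc.2 ⟨le_trans ham hmb, le_rfl⟩) ht.2
        have h3 := (abs_le.1 this).1
        show f t - f b ≤ M * (b - t)
        linarith
    have h2 : (∫ t in m..b, M * (b - t)) = M * (b - a) ^ 2 / 8 := by
      rw [intervalIntegral.integral_const_mul, intervalIntegral.integral_sub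
        intervalIntegrable_const intervalIntegral.intervalIntegrable_id,
        integral_id, intervalIntegral.integral_const]
      simp only [smul_eq_mul, hm]; ring
    linarith
  calc |(∫ t in a..m, (f t - f a)) + (∫ t in m..b, (f t - f b))|
      ≤ |∫ t in a..m, (f t - f a)| + |∫ t in m..b, (f t - f b)| := abs_add_le _ _
    _ ≤ M * (b - a) ^ 2 / 8 + M * (b - a) ^ 2 / 8 := add_le_add bound1 bound2
    _ = M * (b - a) ^ 2 / 4 := by ring
end

section
/- Let a < b be real numbers, x ∈ [a,b], α₁ ∈ [a,x], and α₂ ∈ [x,b]. Let f : ℝ → ℝ be continuous on [a,b] and differentiable on (a,b), and let M ≥ 0 satisfy |f'(t)| ≤ M for all t ∈ (a,b). Then |∫_a^b f(t) dt − ((α₁ − a)·f(a) + (α₂ − α₁)·f(x) + (b − α₂)·f(b))| ≤ M·((α₁ − a)² + (x − α₁)² + (α₂ − x)² + (b − α₂)²)/2. -/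
/-- Three-point Ostrowski type inequality (continuous case). -/
theorem three_point_ostrowski (a b x α₁ α₂ M : ℝ) (hab : a < b)
    (hx : x ∈ Set.Icc a b) (hα₁ : α₁ ∈ Set.Icc a x) (hα₂ : α₂ ∈ Set.Icc x b)
    (f f' : ℝ → ℝ)
    (hcont : ContinuousOn f (Set.Icc a b))
    (hderiv : ∀ t ∈ Set.Ioo a b, HasDerivAt f (f' t) t)
    (hM : 0 ≤ M) (hbound : ∀ t ∈ Set.Ioo a b, |f' t| ≤ M) :
    |(∫ t in a..b, f t) - ((α₁ - a) * f a + (α₂ - α₁) * f x + (b - α₂) * f b)| ≤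
      M * ((α₁ - a) ^ 2 + (x - α₁) ^ 2 + (α₂ - x) ^ 2 + (b - α₂) ^ 2) / 2 := by
  obtain ⟨hax, hxb⟩ := hx
  obtain ⟨haα₁, hα₁x⟩ := hα₁
  obtain ⟨hxα₂, hα₂b⟩ := hα₂
  -- Lipschitz bound via MVT
  have hLip : ∀ s ∈ Set.Icc a b, ∀ t ∈ Set.Icc a b, |f t - f s| ≤ M * |t - s| := by
    have main : ∀ s ∈ Set.Icc a b, ∀ t ∈ Set.Icc a b, s < t → |f t - f s| ≤ M * |t - s| := by
      intro s hs t ht hst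
      obtain ⟨c, hc, hc'⟩ := exists_hasDerivAt_eq_slope f f' hst
        (hcont.mono (Set.Icc_subset_Icc hs.1 ht.2))
        (fun y hy => hderiv y ⟨lt_of_le_of_lt hs.1 hy.1, lt_of_lt_of_le hy.2 ht.2⟩)
      have hcab : c ∈ Set.Ioo a b := ⟨lt_of_le_of_lt hs.1 hc.1, lt_of_lt_of_le hc.2 ht.2⟩
      have : f t - f s = f' c * (t - s) := by
        rw [hc', div_mul_cancel₀ _ (sub_ne_zero.mpr hst.ne')]
      rw [this, abs_mul]
      exact mul_le_mul_of_nonneg_right (hbound c hcab) (abs_nonneg _)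
    intro s hs t ht
    rcases lt_trichotomy s t with h | h | h
    · exact main s hs t ht h
    · simp [h]
    · have := main t ht s hs h
      rwa [abs_sub_comm (f s), abs_sub_comm s] at this
  have hint : ∀ c d : ℝ, a ≤ c → c ≤ d → d ≤ b → IntervalIntegrable f MeasureTheory.volume c d := by
    intro c d h1 h2 h3
    apply (hcont.mono _).intervalIntegrable
    rw [Set.uIcc_of_le h2]
    exact Set.Icc_subset_Icc h1 h3
  -- integral of (t - c) over [c,d]
  have hpoly : ∀ c d : ℝ, (∫ t in c..d, (t - c)) = (d - c) ^ 2 / 2 := by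
    intro c d
    rw [intervalIntegral.integral_sub intervalIntegral.intervalIntegrable_id intervalIntegrable_const,
      integral_id, intervalIntegral.integral_const, smul_eq_mul]
    ring
  have hpoly' : ∀ c d : ℝ, (∫ t in c..d, (d - t)) = (d - c) ^ 2 / 2 := by
    intro c d
    rw [intervalIntegral.integral_sub intervalIntegrable_const intervalIntegral.intervalIntegrable_id,
      integral_id, intervalIntegral.integral_const, smul_eq_mul]
    ring
  -- key estimates
  have keyL : ∀ c d : ℝ, a ≤ c → c ≤ d → d ≤ b →
      |∫ t in c..d, (f t - f c)| ≤ M * (d - c) ^ 2 / 2 := by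
    intro c d h1 h2 h3
    have hic : c ∈ Set.Icc a b := ⟨h1, le_trans h2 h3⟩
    have hintsub : IntervalIntegrable (fun t => f t - f c) MeasureTheory.volume c d :=
      (hint c d h1 h2 h3).sub intervalIntegrable_const
    calc |∫ t in c..d, (f t - f c)| ≤ ∫ t in c..d, |f t - f c| :=
          intervalIntegral.abs_integral_le_integral_abs h2
      _ ≤ ∫ t in c..d, M * (t - c) := by
          apply intervalIntegral.integral_mono_on h2 hintsub.abs
            (intervalIntegrable_const.mul_continuousOn (by fun_prop))
          intro t ht
          have h := hLip c hic t ⟨le_trans h1 ht.1, le_trans ht.2 h3⟩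
          rwa [abs_of_nonneg (by linarith [ht.1] : (0:ℝ) ≤ t - c)] at h
      _ = M * (d - c) ^ 2 / 2 := by
          rw [intervalIntegral.integral_const_mul, hpoly]; ring
  have keyR : ∀ c d : ℝ, a ≤ c → c ≤ d → d ≤ b →
      |∫ t in c..d, (f t - f d)| ≤ M * (d - c) ^ 2 / 2 := by
    intro c d h1 h2 h3
    have hid : d ∈ Set.Icc a b := ⟨le_trans h1 h2, h3⟩
    have hintsub : IntervalIntegrable (fun t => f t - f d) MeasureTheory.volume c d :=
      (hint c d h1 h2 h3).sub intervalIntegrable_const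
    calc |∫ t in c..d, (f t - f d)| ≤ ∫ t in c..d, |f t - f d| :=
          intervalIntegral.abs_integral_le_integral_abs h2
      _ ≤ ∫ t in c..d, M * (d - t) := by
          apply intervalIntegral.integral_mono_on h2 hintsub.abs
            (intervalIntegrable_const.mul_continuousOn (by fun_prop))
          intro t ht
          have h := hLip d hid t ⟨le_trans h1 ht.1, le_trans ht.2 h3⟩
          rwa [abs_sub_comm t d, abs_of_nonneg (by linarith [ht.2] : (0:ℝ) ≤ d - t)] at h
      _ = M * (d - c) ^ 2 / 2 := by
          rw [intervalIntegral.integral_const_mul, hpoly']; ring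
  -- split the integral
  have haα₁' : a ≤ α₁ := haα₁
  have hα₁b : α₁ ≤ b := le_trans hα₁x hxb
  have haα₂ : a ≤ α₂ := le_trans hax hxα₂
  have i1 := hint a α₁ le_rfl haα₁ hα₁b
  have i2 := hint α₁ x haα₁ hα₁x hxb
  have i3 := hint x α₂ hax hxα₂ hα₂b
  have i4 := hint α₂ b haα₂ hα₂b le_rfl
  have split : (∫ t in a..b, f t) =
      (∫ t in a..α₁, f t) + (∫ t in α₁..x, f t) + (∫ t in x..α₂, f t) + (∫ t in α₂..b, f t) := by
    rw [intervalIntegral.integral_add_adjacent_intervals i1 i2,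
      intervalIntegral.integral_add_adjacent_intervals (i1.trans i2) i3,
      intervalIntegral.integral_add_adjacent_intervals ((i1.trans i2).trans i3) i4]
  have e1 : (∫ t in a..α₁, (f t - f a)) = (∫ t in a..α₁, f t) - (α₁ - a) * f a := by
    rw [intervalIntegral.integral_sub i1 intervalIntegrable_const,
      intervalIntegral.integral_const, smul_eq_mul]
  have e2 : (∫ t in α₁..x, (f t - f x)) = (∫ t in α₁..x, f t) - (x - α₁) * f x := by
    rw [intervalIntegral.integral_sub i2 intervalIntegrable_const,
      intervalIntegral.integral_const, smul_eq_mul]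
  have e3 : (∫ t in x..α₂, (f t - f x)) = (∫ t in x..α₂, f t) - (α₂ - x) * f x := by
    rw [intervalIntegral.integral_sub i3 intervalIntegrable_const,
      intervalIntegral.integral_const, smul_eq_mul]
  have e4 : (∫ t in α₂..b, (f t - f b)) = (∫ t in α₂..b, f t) - (b - α₂) * f b := by
    rw [intervalIntegral.integral_sub i4 intervalIntegrable_const,
      intervalIntegral.integral_const, smul_eq_mul]
  have hdecomp : (∫ t in a..b, f t) - ((α₁ - a) * f a + (α₂ - α₁) * f x + (b - α₂) * f b) =
      (∫ t in a..α₁, (f t - f a)) + (∫ t in α₁..x, (f t - f x)) +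
      (∫ t in x..α₂, (f t - f x)) + (∫ t in α₂..b, (f t - f b)) := by
    rw [e1, e2, e3, e4, split]; ring
  rw [hdecomp]
  have b1 := keyL a α₁ le_rfl haα₁ hα₁b
  have b2 := keyR α₁ x haα₁ hα₁x hxb
  have b3 := keyL x α₂ hax hxα₂ hα₂b
  have b4 := keyR α₂ b haα₂ hα₂b le_rfl
  calc |(∫ t in a..α₁, (f t - f a)) + (∫ t in α₁..x, (f t - f x)) +
      (∫ t in x..α₂, (f t - f x)) + (∫ t in α₂..b, (f t - f b))|
      ≤ |(∫ t in a..α₁, (f t - f a))| + |(∫ t in α₁..x, (f t - f x))| +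
        |(∫ t in x..α₂, (f t - f x))| + |(∫ t in α₂..b, (f t - f b))| := by
        calc _ ≤ |(∫ t in a..α₁, (f t - f a)) + (∫ t in α₁..x, (f t - f x)) +
              (∫ t in x..α₂, (f t - f x))| + |(∫ t in α₂..b, (f t - f b))| := abs_add_le _ _
          _ ≤ _ := by
            gcongr
            calc _ ≤ |(∫ t in a..α₁, (f t - f a)) + (∫ t in α₁..x, (f t - f x))| +
                  |(∫ t in x..α₂, (f t - f x))| := abs_add_le _ _
              _ ≤ _ := by gcongr; exact abs_add_le _ _
    _ ≤ M * ((α₁ - a) ^ 2 + (x - α₁) ^ 2 + (α₂ - x) ^ 2 + (b - α₂) ^ 2) / 2 := by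
        have := add_le_add (add_le_add (add_le_add b1 b2) b3) b4
        linarith
end

section
/- Let a < b be real numbers. Let f : ℝ → ℝ be continuous on [a,b] and differentiable on (a,b), and let M ≥ 0 satisfy |f'(t)| ≤ M for all t ∈ (a,b). Then |∫_a^b f(t) dt − f((a+b)/2)·(b − a)| ≤ M·(b − a)²/4. -/
/-!
By the mean value theorem the derivative bound makes `f` `M`-Lipschitz on `[a, b]`, so
`|f t - f x| ≤ M |t - x|` there. Integrating this against `t` gives Ostrowski's inequality
`|∫ f - f x (b - a)| ≤ M ((x - a)² + (b - x)²) / 2`, and `x = (a + b) / 2` minimises the right side.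
-/

open Set intervalIntegral MeasureTheory

lemma abs_sub_le_mul_abs_sub_of_abs_deriv_le {f f' : ℝ → ℝ} {a b M : ℝ}
    (hcont : ContinuousOn f (Icc a b)) (hderiv : ∀ t ∈ Ioo a b, HasDerivAt f (f' t) t)
    (hbound : ∀ t ∈ Ioo a b, |f' t| ≤ M) {x y : ℝ} (hx : x ∈ Icc a b) (hy : y ∈ Icc a b) :
    |f y - f x| ≤ M * |y - x| := by
  have hdiff : DifferentiableOn ℝ f (interior (Icc a b)) := by
    rw [interior_Icc]
    exact fun t ht => (hderiv t ht).differentiableAt.differentiableWithinAt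
  have hderiv_bound : ∀ t ∈ interior (Icc a b), |deriv f t| ≤ M := by
    rw [interior_Icc]
    intro t ht
    rw [(hderiv t ht).deriv]
    exact hbound t ht
  have hordered : ∀ x ∈ Icc a b, ∀ y ∈ Icc a b, x ≤ y → |f y - f x| ≤ M * (y - x) := by
    intro x hx y hy hxy
    have hlower := (convex_Icc a b).mul_sub_le_image_sub_of_le_deriv hcont hdiff
      (fun t ht => neg_le_of_abs_le (hderiv_bound t ht)) x hx y hy hxy
    have hupper := (convex_Icc a b).image_sub_le_mul_sub_of_deriv_le hcont hdiff
      (fun t ht => le_of_abs_le (hderiv_bound t ht)) x hx y hy hxy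
    exact abs_le.2 ⟨by linarith, hupper⟩
  rcases le_total x y with hxy | hyx
  · rw [abs_of_nonneg (sub_nonneg.2 hxy)]
    exact hordered x hx y hy hxy
  · rw [abs_sub_comm, abs_sub_comm y, abs_of_nonneg (sub_nonneg.2 hyx)]
    exact hordered y hy x hx hyx

lemma integral_abs_sub_of_mem_Icc {a b x : ℝ} (hx : x ∈ Icc a b) :
    ∫ t in a..b, |t - x| = ((x - a) ^ 2 + (b - x) ^ 2) / 2 := by
  have hleft : ∫ t in a..x, |t - x| = (x - a) ^ 2 / 2 := by
    rw [integral_of_le hx.1, ← uIoc_of_ge hx.1]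
    convert integral_pow_abs_sub_uIoc (a := x) (b := a) 1 using 1
    · simp only [pow_one]
    · norm_num [abs_sub_comm a x]
  have hright : ∫ t in x..b, |t - x| = (b - x) ^ 2 / 2 := by
    rw [integral_of_le hx.2, ← uIoc_of_le hx.2]
    convert integral_pow_abs_sub_uIoc (a := x) (b := b) 1 using 1
    · simp only [pow_one]
    · norm_num
  have hint : ∀ c d : ℝ, IntervalIntegrable (fun t => |t - x|) volume c d := fun c d =>
    (by fun_prop : Continuous fun t => |t - x|).intervalIntegrable c d
  rw [← integral_add_adjacent_intervals (hint a x) (hint x b), hleft, hright]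
  ring

theorem abs_integral_sub_mul_le_of_abs_deriv_le {f f' : ℝ → ℝ} {a b M x : ℝ}
    (hcont : ContinuousOn f (Icc a b)) (hderiv : ∀ t ∈ Ioo a b, HasDerivAt f (f' t) t)
    (hbound : ∀ t ∈ Ioo a b, |f' t| ≤ M) (hx : x ∈ Icc a b) :
    |(∫ t in a..b, f t) - f x * (b - a)| ≤ M * ((x - a) ^ 2 + (b - x) ^ 2) / 2 := by
  have hab : a ≤ b := hx.1.trans hx.2
  calc |(∫ t in a..b, f t) - f x * (b - a)| = |∫ t in a..b, (f t - f x)| := by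
        rw [integral_sub (hcont.intervalIntegrable_of_Icc hab) intervalIntegrable_const,
          intervalIntegral.integral_const, smul_eq_mul, mul_comm]
    _ ≤ ∫ t in a..b, M * |t - x| :=
        norm_integral_le_of_norm_le (f := fun t => f t - f x) hab
          (ae_of_all _ fun t ht => abs_sub_le_mul_abs_sub_of_abs_deriv_le hcont hderiv hbound
            hx (Ioc_subset_Icc_self ht))
          ((by fun_prop : Continuous fun t => M * |t - x|).intervalIntegrable a b)
    _ = M * ((x - a) ^ 2 + (b - x) ^ 2) / 2 := by
        rw [intervalIntegral.integral_const_mul, integral_abs_sub_of_mem_Icc hx]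
        ring

theorem midpoint_inequality_general (a b M : ℝ) (hab : a < b)
    (f f' : ℝ → ℝ)
    (hcont : ContinuousOn f (Set.Icc a b))
    (hderiv : ∀ t ∈ Set.Ioo a b, HasDerivAt f (f' t) t)
    (hbound : ∀ t ∈ Set.Ioo a b, |f' t| ≤ M) :
    |(∫ t in a..b, f t) - f ((a + b) / 2) * (b - a)| ≤ M * (b - a) ^ 2 / 4 := by
  have hmid : (a + b) / 2 ∈ Icc a b := ⟨by linarith, by linarith⟩
  calc |(∫ t in a..b, f t) - f ((a + b) / 2) * (b - a)|
      ≤ M * (((a + b) / 2 - a) ^ 2 + (b - (a + b) / 2) ^ 2) / 2 :=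
        abs_integral_sub_mul_le_of_abs_deriv_le hcont hderiv hbound hmid
    _ = M * (b - a) ^ 2 / 4 := by ring

/-- Mid-point inequality (continuous case). -/
theorem midpoint_inequality (a b M : ℝ) (hab : a < b)
    (f f' : ℝ → ℝ)
    (hcont : ContinuousOn f (Set.Icc a b))
    (hderiv : ∀ t ∈ Set.Ioo a b, HasDerivAt f (f' t) t)
    (hM : 0 ≤ M) (hbound : ∀ t ∈ Set.Ioo a b, |f' t| ≤ M) :
    |(∫ t in a..b, f t) - f ((a + b) / 2) * (b - a)| ≤ M * (b - a) ^ 2 / 4 :=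
  midpoint_inequality_general a b M hab f f' hcont hderiv hbound
end

section
/- Let a < b be real numbers and x ∈ [(5a+b)/6, (a+5b)/6]. Let f : ℝ → ℝ be continuous on [a,b] and differentiable on (a,b), and let M ≥ 0 satisfy |f'(t)| ≤ M for all t ∈ (a,b). Then |∫_a^b f(t) dt − ((b−a)/3)·((f(a) + f(b))/2 + 2·f(x))| ≤ M·( (b−a)²/36 + (x − (5a+b)/6)²/2 + (x − (a+5b)/6)²/2 ). -/
open MeasureTheory Set intervalIntegral

/-!
On an interval `[p, q]` and for `c ∈ [p, q]`, integration by parts gives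
`∫ₚ^q (t - c) f'(t) dt = (q - c) f(q) - (p - c) f(p) - ∫ₚ^q f`, and the left side is at most
`M ∫ₚ^q |t - c| dt = M ((c - p)² / 2 + (q - c)² / 2)`. Applying this on `[a, x]` with
`c = (5a + b)/6` and on `[x, b]` with `c = (a + 5b)/6` and adding, the boundary terms at `x`
combine into the three-point rule.
-/

section PeanoKernel

variable {f f' : ℝ → ℝ} {p q c M : ℝ}

theorem intervalIntegrable_deriv_of_abs_le (hpq : p ≤ q)
    (hderiv : ∀ t ∈ Ioo p q, HasDerivAt f (f' t) t) (hbound : ∀ t ∈ Ioo p q, |f' t| ≤ M) :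
    IntervalIntegrable f' volume p q := by
  rw [intervalIntegrable_iff_integrableOn_Ioo_of_le hpq]
  have hderiv_ae : ∀ᵐ t ∂volume.restrict (Ioo p q), deriv f t = f' t :=
    (ae_restrict_iff' measurableSet_Ioo).2 <| .of_forall fun t ht => (hderiv t ht).deriv
  refine Integrable.of_bound ((measurable_deriv f).aestronglyMeasurable.congr hderiv_ae) M ?_
  exact (ae_restrict_iff' measurableSet_Ioo).2 <| .of_forall hbound

theorem integral_abs_sub_const (hpc : p ≤ c) (hcq : c ≤ q) :
    ∫ t in p..q, |t - c| = (c - p) ^ 2 / 2 + (q - c) ^ 2 / 2 := by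
  rw [integral_comp_sub_right (fun t => |t|), ← integral_add_adjacent_intervals
    (continuous_abs.intervalIntegrable _ 0) (continuous_abs.intervalIntegrable 0 _)]
  have hneg : ∫ t in p - c..0, |t| = ∫ t in p - c..0, -t :=
    integral_congr fun t ht => abs_of_nonpos (by rw [uIcc_of_le (by linarith)] at ht; exact ht.2)
  have hpos : ∫ t in (0 : ℝ)..q - c, |t| = ∫ t in (0 : ℝ)..q - c, t :=
    integral_congr fun t ht => abs_of_nonneg (by rw [uIcc_of_le (by linarith)] at ht; exact ht.1)
  rw [hneg, hpos, intervalIntegral.integral_neg, integral_id, integral_id]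
  ring

theorem integral_sub_const_mul_deriv (hpq : p ≤ q) (hcont : ContinuousOn f (Icc p q))
    (hderiv : ∀ t ∈ Ioo p q, HasDerivAt f (f' t) t) (hint : IntervalIntegrable f' volume p q) :
    ∫ t in p..q, (t - c) * f' t = (q - c) * f q - (p - c) * f p - ∫ t in p..q, f t := by
  have key := integral_mul_deriv_eq_deriv_mul_of_hasDeriv_right (u := fun t => t - c)
    (u' := fun _ => 1) (by fun_prop) (by rwa [uIcc_of_le hpq])
    (fun t _ => ((hasDerivAt_id t).sub_const c).hasDerivWithinAt)
    (fun t ht => by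
      rw [min_eq_left hpq, max_eq_right hpq] at ht
      exact (hderiv t ht).hasDerivWithinAt)
    intervalIntegrable_const hint
  simpa only [one_mul] using key

theorem abs_integral_sub_const_mul_le (hpc : p ≤ c) (hcq : c ≤ q)
    (hbound : ∀ t ∈ Ioo p q, |f' t| ≤ M) :
    |∫ t in p..q, (t - c) * f' t| ≤ M * ((c - p) ^ 2 / 2 + (q - c) ^ 2 / 2) := by
  have hle : ∀ᵐ t, t ∈ Ioc p q → ‖(t - c) * f' t‖ ≤ M * |t - c| := by
    filter_upwards [Measure.ae_ne volume q] with t htq ht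
    rw [Real.norm_eq_abs, abs_mul, mul_comm]
    exact mul_le_mul_of_nonneg_right (hbound t ⟨ht.1, lt_of_le_of_ne ht.2 htq⟩) (abs_nonneg _)
  have := norm_integral_le_of_norm_le (hpc.trans hcq) hle
    ((by fun_prop : Continuous fun t => M * |t - c|).intervalIntegrable p q)
  rwa [intervalIntegral.integral_const_mul, integral_abs_sub_const hpc hcq] at this

theorem abs_endpoint_rule_sub_integral_le (hpc : p ≤ c) (hcq : c ≤ q)
    (hcont : ContinuousOn f (Icc p q)) (hderiv : ∀ t ∈ Ioo p q, HasDerivAt f (f' t) t)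
    (hbound : ∀ t ∈ Ioo p q, |f' t| ≤ M) :
    |(q - c) * f q - (p - c) * f p - ∫ t in p..q, f t| ≤
      M * ((c - p) ^ 2 / 2 + (q - c) ^ 2 / 2) := by
  have hpq := hpc.trans hcq
  rw [← integral_sub_const_mul_deriv hpq hcont hderiv
    (intervalIntegrable_deriv_of_abs_le hpq hderiv hbound)]
  exact abs_integral_sub_const_mul_le hpc hcq hbound

end PeanoKernel

theorem abs_integral_sub_three_point_le {f f' : ℝ → ℝ} {a α₁ x α₂ b M : ℝ}
    (ha : a ≤ α₁) (hα₁ : α₁ ≤ x) (hα₂ : x ≤ α₂) (hb : α₂ ≤ b)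
    (hcont : ContinuousOn f (Icc a b)) (hderiv : ∀ t ∈ Ioo a b, HasDerivAt f (f' t) t)
    (hbound : ∀ t ∈ Ioo a b, |f' t| ≤ M) :
    |(∫ t in a..b, f t) - ((α₁ - a) * f a + (α₂ - α₁) * f x + (b - α₂) * f b)| ≤
      M * ((α₁ - a) ^ 2 / 2 + (x - α₁) ^ 2 / 2 + (α₂ - x) ^ 2 / 2 + (b - α₂) ^ 2 / 2) := by
  have hax : a ≤ x := ha.trans hα₁
  have hxb : x ≤ b := hα₂.trans hb
  have hleft : Icc a x ⊆ Icc a b := Icc_subset_Icc le_rfl hxb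
  have hright : Icc x b ⊆ Icc a b := Icc_subset_Icc hax le_rfl
  have h₁ := abs_endpoint_rule_sub_integral_le ha hα₁ (hcont.mono hleft)
    (fun t ht => hderiv t (Ioo_subset_Ioo le_rfl hxb ht))
    (fun t ht => hbound t (Ioo_subset_Ioo le_rfl hxb ht))
  have h₂ := abs_endpoint_rule_sub_integral_le hα₂ hb (hcont.mono hright)
    (fun t ht => hderiv t (Ioo_subset_Ioo hax le_rfl ht))
    (fun t ht => hbound t (Ioo_subset_Ioo hax le_rfl ht))
  rw [← integral_add_adjacent_intervals
    ((hcont.mono hleft).intervalIntegrable_of_Icc hax)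
    ((hcont.mono hright).intervalIntegrable_of_Icc hxb)]
  calc _ = |((x - α₁) * f x - (a - α₁) * f a - ∫ t in a..x, f t) +
          ((b - α₂) * f b - (x - α₂) * f x - ∫ t in x..b, f t)| := by
        rw [← abs_neg]; congr 1; ring
    _ ≤ _ := (abs_add_le _ _).trans (by linarith)

theorem corollary_4_5_general (a b x M : ℝ)
    (hx : x ∈ Set.Icc ((5 * a + b) / 6) ((a + 5 * b) / 6))
    (f f' : ℝ → ℝ)
    (hcont : ContinuousOn f (Set.Icc a b))
    (hderiv : ∀ t ∈ Set.Ioo a b, HasDerivAt f (f' t) t)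
    (hbound : ∀ t ∈ Set.Ioo a b, |f' t| ≤ M) :
    |(∫ t in a..b, f t) - (b - a) / 3 * ((f a + f b) / 2 + 2 * f x)| ≤
      M * ((b - a) ^ 2 / 36 + (x - (5 * a + b) / 6) ^ 2 / 2 +
        (x - (a + 5 * b) / 6) ^ 2 / 2) := by
  have hab : a ≤ b := by linarith [hx.1.trans hx.2]
  have h := abs_integral_sub_three_point_le (by linarith) hx.1 hx.2 (by linarith)
    hcont hderiv hbound
  convert h using 2 <;> ring

/-- Corollary 4.5: three-point inequality with α₁ = (5a+b)/6, α₂ = (a+5b)/6. -/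
theorem corollary_4_5 (a b x M : ℝ) (hab : a < b)
    (hx : x ∈ Set.Icc ((5 * a + b) / 6) ((a + 5 * b) / 6))
    (f f' : ℝ → ℝ)
    (hcont : ContinuousOn f (Set.Icc a b))
    (hderiv : ∀ t ∈ Set.Ioo a b, HasDerivAt f (f' t) t)
    (hM : 0 ≤ M) (hbound : ∀ t ∈ Set.Ioo a b, |f' t| ≤ M) :
    |(∫ t in a..b, f t) - (b - a) / 3 * ((f a + f b) / 2 + 2 * f x)| ≤
      M * ((b - a) ^ 2 / 36 + (x - (5 * a + b) / 6) ^ 2 / 2 +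
        (x - (a + 5 * b) / 6) ^ 2 / 2) :=
  corollary_4_5_general a b x M hx f f' hcont hderiv hbound
end

section
/- Let a < b be real numbers. Let f : ℝ → ℝ be continuous on [a,b] and differentiable on (a,b), and let M ≥ 0 satisfy |f'(t)| ≤ M for all t ∈ (a,b). Then |∫_a^b f(t) dt − ((b−a)/3)·((f(a) + f(b))/2 + 2·f((a+b)/2))| ≤ M·(5/36)·(b − a)². -/
open Set intervalIntegral MeasureTheory

private lemma simpson_lip (a b M : ℝ) (f f' : ℝ → ℝ)
    (hcont : ContinuousOn f (Set.Icc a b))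
    (hderiv : ∀ t ∈ Set.Ioo a b, HasDerivAt f (f' t) t)
    (hbound : ∀ t ∈ Set.Ioo a b, |f' t| ≤ M) :
    ∀ x y, a ≤ x → x ≤ y → y ≤ b → |f y - f x| ≤ M * (y - x) := by
  intro x y hax hxy hyb
  rcases eq_or_lt_of_le hxy with rfl | h
  · simp
  · obtain ⟨c, hc, hc'⟩ := exists_hasDerivAt_eq_slope f f' h
      (hcont.mono (Icc_subset_Icc hax hyb))
      (fun t ht => hderiv t ⟨lt_of_le_of_lt hax ht.1, lt_of_lt_of_le ht.2 hyb⟩)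
    have h1 : f y - f x = f' c * (y - x) := by
      rw [hc', div_mul_cancel₀]
      exact sub_ne_zero.2 h.ne'
    rw [h1, abs_mul, abs_of_pos (sub_pos.2 h)]
    have hMc : |f' c| ≤ M := hbound c ⟨lt_of_le_of_lt hax hc.1, lt_of_lt_of_le hc.2 hyb⟩
    nlinarith [abs_nonneg (f' c), sub_pos.2 h]

private lemma simpson_pieceL (g : ℝ → ℝ) (M u v : ℝ) (huv : u ≤ v)
    (hg : IntervalIntegrable g MeasureTheory.volume u v)
    (hb : ∀ t ∈ Set.Icc u v, |g t| ≤ M * (t - u)) :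
    |∫ t in u..v, g t| ≤ M * (v - u) ^ 2 / 2 := by
  have h1 : |∫ t in u..v, g t| ≤ ∫ t in u..v, |g t| :=
    intervalIntegral.abs_integral_le_integral_abs huv
  have h2 : (∫ t in u..v, |g t|) ≤ ∫ t in u..v, M * (t - u) := by
    apply intervalIntegral.integral_mono_on huv hg.abs
    · exact (Continuous.intervalIntegrable (by continuity) u v)
    · exact hb
  have h3 : (∫ t in u..v, M * (t - u)) = M * (v - u) ^ 2 / 2 := by
    rw [intervalIntegral.integral_const_mul,
      intervalIntegral.integral_sub intervalIntegrable_id intervalIntegrable_const,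
      integral_id, intervalIntegral.integral_const, smul_eq_mul]
    ring
  linarith

private lemma simpson_pieceR (g : ℝ → ℝ) (M u v : ℝ) (huv : u ≤ v)
    (hg : IntervalIntegrable g MeasureTheory.volume u v)
    (hb : ∀ t ∈ Set.Icc u v, |g t| ≤ M * (v - t)) :
    |∫ t in u..v, g t| ≤ M * (v - u) ^ 2 / 2 := by
  have h1 : |∫ t in u..v, g t| ≤ ∫ t in u..v, |g t| :=
    intervalIntegral.abs_integral_le_integral_abs huv
  have h2 : (∫ t in u..v, |g t|) ≤ ∫ t in u..v, M * (v - t) := by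
    apply intervalIntegral.integral_mono_on huv hg.abs
    · exact (Continuous.intervalIntegrable (by continuity) u v)
    · exact hb
  have h3 : (∫ t in u..v, M * (v - t)) = M * (v - u) ^ 2 / 2 := by
    rw [intervalIntegral.integral_const_mul,
      intervalIntegral.integral_sub intervalIntegrable_const intervalIntegrable_id,
      integral_id, intervalIntegral.integral_const, smul_eq_mul]
    ring
  linarith

/-- Simpson inequality (continuous case). -/
theorem simpson_inequality (a b M : ℝ) (hab : a < b)
    (f f' : ℝ → ℝ)
    (hcont : ContinuousOn f (Set.Icc a b))
    (hderiv : ∀ t ∈ Set.Ioo a b, HasDerivAt f (f' t) t)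
    (hM : 0 ≤ M) (hbound : ∀ t ∈ Set.Ioo a b, |f' t| ≤ M) :
    |(∫ t in a..b, f t) - (b - a) / 3 * ((f a + f b) / 2 + 2 * f ((a + b) / 2))| ≤
      M * (5 / 36) * (b - a) ^ 2 := by
  set x1 : ℝ := (5 * a + b) / 6 with hx1
  set m : ℝ := (a + b) / 2 with hm
  set x2 : ℝ := (a + 5 * b) / 6 with hx2
  have hax1 : a ≤ x1 := by rw [hx1]; linarith
  have hx1m : x1 ≤ m := by rw [hx1, hm]; linarith
  have hmx2 : m ≤ x2 := by rw [hm, hx2]; linarith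
  have hx2b : x2 ≤ b := by rw [hx2]; linarith
  have lip := simpson_lip a b M f f' hcont hderiv hbound
  have hint : ∀ u v : ℝ, a ≤ u → u ≤ v → v ≤ b →
      IntervalIntegrable f MeasureTheory.volume u v := by
    intro u v hau huv hvb
    apply ContinuousOn.intervalIntegrable
    apply hcont.mono
    rw [Set.uIcc_of_le huv]
    exact Set.Icc_subset_Icc hau hvb
  have i1 := hint a x1 le_rfl hax1 (hx1m.trans (hmx2.trans hx2b))
  have i2 := hint x1 m hax1 hx1m (hmx2.trans hx2b)
  have i3 := hint m x2 (hax1.trans hx1m) hmx2 hx2b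
  have i4 := hint x2 b (hax1.trans (hx1m.trans hmx2)) hx2b le_rfl
  have s1 := intervalIntegral.integral_add_adjacent_intervals i1 i2
  have s2 := intervalIntegral.integral_add_adjacent_intervals (i1.trans i2) i3
  have s3 := intervalIntegral.integral_add_adjacent_intervals ((i1.trans i2).trans i3) i4
  have eA : (∫ t in a..x1, f t - f a) = (∫ t in a..x1, f t) - (x1 - a) * f a := by
    rw [intervalIntegral.integral_sub i1 intervalIntegrable_const,
      intervalIntegral.integral_const, smul_eq_mul]
  have eB : (∫ t in x1..m, f t - f m) = (∫ t in x1..m, f t) - (m - x1) * f m := by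
    rw [intervalIntegral.integral_sub i2 intervalIntegrable_const,
      intervalIntegral.integral_const, smul_eq_mul]
  have eC : (∫ t in m..x2, f t - f m) = (∫ t in m..x2, f t) - (x2 - m) * f m := by
    rw [intervalIntegral.integral_sub i3 intervalIntegrable_const,
      intervalIntegral.integral_const, smul_eq_mul]
  have eD : (∫ t in x2..b, f t - f b) = (∫ t in x2..b, f t) - (b - x2) * f b := by
    rw [intervalIntegral.integral_sub i4 intervalIntegrable_const,
      intervalIntegral.integral_const, smul_eq_mul]
  have key : (∫ t in a..b, f t) - (b - a) / 3 * ((f a + f b) / 2 + 2 * f m)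
      = (∫ t in a..x1, f t - f a) + (∫ t in x1..m, f t - f m)
        + (∫ t in m..x2, f t - f m) + (∫ t in x2..b, f t - f b) := by
    rw [eA, eB, eC, eD, ← s3, ← s2, ← s1]
    rw [hx1, hm, hx2]
    ring
  have bA : |∫ t in a..x1, f t - f a| ≤ M * (x1 - a) ^ 2 / 2 := by
    apply simpson_pieceL _ _ _ _ hax1 (i1.sub intervalIntegrable_const)
    intro t ht
    exact lip a t le_rfl ht.1 (ht.2.trans (hx1m.trans (hmx2.trans hx2b)))
  have bB : |∫ t in x1..m, f t - f m| ≤ M * (m - x1) ^ 2 / 2 := by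
    apply simpson_pieceR _ _ _ _ hx1m (i2.sub intervalIntegrable_const)
    intro t ht
    rw [abs_sub_comm]
    exact lip t m (hax1.trans ht.1) ht.2 (hmx2.trans hx2b)
  have bC : |∫ t in m..x2, f t - f m| ≤ M * (x2 - m) ^ 2 / 2 := by
    apply simpson_pieceL _ _ _ _ hmx2 (i3.sub intervalIntegrable_const)
    intro t ht
    exact lip m t (hax1.trans hx1m) ht.1 (ht.2.trans hx2b)
  have bD : |∫ t in x2..b, f t - f b| ≤ M * (b - x2) ^ 2 / 2 := by
    apply simpson_pieceR _ _ _ _ hx2b (i4.sub intervalIntegrable_const)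
    intro t ht
    rw [abs_sub_comm]
    exact lip t b (hax1.trans (hx1m.trans (hmx2.trans ht.1))) ht.2 le_rfl
  have l1 : x1 - a = (b - a) / 6 := by rw [hx1]; ring
  have l2 : m - x1 = (b - a) / 3 := by rw [hx1, hm]; ring
  have l3 : x2 - m = (b - a) / 3 := by rw [hm, hx2]; ring
  have l4 : b - x2 = (b - a) / 6 := by rw [hx2]; ring
  rw [l1] at bA; rw [l2] at bB; rw [l3] at bC; rw [l4] at bD
  rw [key]
  have habs : |(∫ t in a..x1, f t - f a) + (∫ t in x1..m, f t - f m)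
        + (∫ t in m..x2, f t - f m) + (∫ t in x2..b, f t - f b)|
      ≤ |∫ t in a..x1, f t - f a| + |∫ t in x1..m, f t - f m|
        + |∫ t in m..x2, f t - f m| + |∫ t in x2..b, f t - f b| := by
    calc |(∫ t in a..x1, f t - f a) + (∫ t in x1..m, f t - f m)
        + (∫ t in m..x2, f t - f m) + (∫ t in x2..b, f t - f b)|
        ≤ |(∫ t in a..x1, f t - f a) + (∫ t in x1..m, f t - f m)
        + (∫ t in m..x2, f t - f m)| + |∫ t in x2..b, f t - f b| := abs_add_le _ _
      _ ≤ |(∫ t in a..x1, f t - f a) + (∫ t in x1..m, f t - f m)|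
        + |∫ t in m..x2, f t - f m| + |∫ t in x2..b, f t - f b| := by
          gcongr; exact abs_add_le _ _
      _ ≤ _ := by gcongr; exact abs_add_le _ _
  nlinarith [habs, bA, bB, bC, bD]
end

section
/- Let a < b be real numbers, α₁ ∈ [a, (a+b)/2], and α₂ ∈ [(a+b)/2, b]. Let f : ℝ → ℝ be continuous on [a,b] and differentiable on (a,b), and let M ≥ 0 satisfy |f'(t)| ≤ M for all t ∈ (a,b). Then |∫_a^b f(t) dt − ((α₁ − a)·f(a) + (α₂ − α₁)·f((a+b)/2) + (b − α₂)·f(b))| ≤ M·((α₁ − a)² + ((a+b)/2 − α₁)² + (α₂ − (a+b)/2)² + (b − α₂)²)/2. -/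
/-!
Split `[a, b]` at `α₁ ≤ (a + b) / 2 ≤ α₂`. On each of the four pieces the quadrature rule
evaluates `f` at one endpoint `p`, and by the mean value theorem `|f t - f p| ≤ M |t - p|`;
integrating this bound over a piece of length `ℓ` gives `M ℓ² / 2`.
-/

open MeasureTheory intervalIntegral Set

theorem abs_sub_le_mul_sub_of_hasDerivAt {f f' : ℝ → ℝ} {a b M x y : ℝ}
    (hcont : ContinuousOn f (Icc a b)) (hderiv : ∀ t ∈ Ioo a b, HasDerivAt f (f' t) t)
    (hbound : ∀ t ∈ Ioo a b, |f' t| ≤ M) (hx : a ≤ x) (hxy : x ≤ y) (hy : y ≤ b) :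
    |f y - f x| ≤ M * (y - x) := by
  rcases hxy.eq_or_lt with rfl | hxy
  · simp
  obtain ⟨c, hc, hslope⟩ := exists_hasDerivAt_eq_slope f f' hxy
    (hcont.mono (Icc_subset_Icc hx hy))
    (fun t ht => hderiv t ⟨hx.trans_lt ht.1, ht.2.trans_le hy⟩)
  have hlen : 0 < y - x := sub_pos.2 hxy
  rw [eq_div_iff hlen.ne'] at hslope
  rw [← hslope, abs_mul, abs_of_pos hlen]
  exact mul_le_mul_of_nonneg_right (hbound c ⟨hx.trans_lt hc.1, hc.2.trans_le hy⟩) hlen.le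

theorem abs_integral_sub_mul_le {f g : ℝ → ℝ} {u v c : ℝ} (huv : u ≤ v)
    (hf : IntervalIntegrable f volume u v) (hg : IntervalIntegrable g volume u v)
    (h : ∀ t ∈ Ioc u v, |f t - c| ≤ g t) :
    |(∫ t in u..v, f t) - (v - u) * c| ≤ ∫ t in u..v, g t := by
  have hsub : (∫ t in u..v, f t) - (v - u) * c = ∫ t in u..v, (f t - c) := by
    simp [integral_sub hf intervalIntegrable_const]
  rw [hsub, ← Real.norm_eq_abs]
  exact norm_integral_le_of_norm_le huv (ae_of_all _ h) hg

theorem abs_integral_sub_mul_left_le {f : ℝ → ℝ} {u v M : ℝ} (huv : u ≤ v)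
    (hf : IntervalIntegrable f volume u v) (hlip : ∀ t ∈ Icc u v, |f t - f u| ≤ M * (t - u)) :
    |(∫ t in u..v, f t) - (v - u) * f u| ≤ M * (v - u) ^ 2 / 2 := by
  have hint : ∫ t in u..v, M * (t - u) = M * (v - u) ^ 2 / 2 := by
    simp only [intervalIntegral.integral_const_mul,
      integral_sub intervalIntegrable_id intervalIntegrable_const, integral_id,
      intervalIntegral.integral_const, smul_eq_mul]
    ring
  rw [← hint]
  exact abs_integral_sub_mul_le huv hf
    ((by fun_prop : Continuous _).intervalIntegrable _ _)
    fun t ht => hlip t (Ioc_subset_Icc_self ht)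

theorem abs_integral_sub_mul_right_le {f : ℝ → ℝ} {u v M : ℝ} (huv : u ≤ v)
    (hf : IntervalIntegrable f volume u v) (hlip : ∀ t ∈ Icc u v, |f t - f v| ≤ M * (v - t)) :
    |(∫ t in u..v, f t) - (v - u) * f v| ≤ M * (v - u) ^ 2 / 2 := by
  have hint : ∫ t in u..v, M * (v - t) = M * (v - u) ^ 2 / 2 := by
    simp only [intervalIntegral.integral_const_mul, integral_comp_sub_left fun t => t, sub_self,
      integral_id]
    ring
  rw [← hint]
  exact abs_integral_sub_mul_le huv hf
    ((by fun_prop : Continuous _).intervalIntegrable _ _)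
    fun t ht => hlip t (Ioc_subset_Icc_self ht)

theorem corollary_4_7_general (a b α₁ α₂ M : ℝ)
    (hα₁ : α₁ ∈ Set.Icc a ((a + b) / 2)) (hα₂ : α₂ ∈ Set.Icc ((a + b) / 2) b)
    (f f' : ℝ → ℝ)
    (hcont : ContinuousOn f (Set.Icc a b))
    (hderiv : ∀ t ∈ Set.Ioo a b, HasDerivAt f (f' t) t)
    (hbound : ∀ t ∈ Set.Ioo a b, |f' t| ≤ M) :
    |(∫ t in a..b, f t) -
        ((α₁ - a) * f a + (α₂ - α₁) * f ((a + b) / 2) + (b - α₂) * f b)| ≤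
      M * ((α₁ - a) ^ 2 + ((a + b) / 2 - α₁) ^ 2 + (α₂ - (a + b) / 2) ^ 2 +
        (b - α₂) ^ 2) / 2 := by
  set m := (a + b) / 2
  obtain ⟨ha₁, h₁m⟩ := hα₁
  obtain ⟨hm₂, h₂b⟩ := hα₂
  have hlip {x y : ℝ} (hx : a ≤ x) (hxy : x ≤ y) (hy : y ≤ b) :
      |f y - f x| ≤ M * (y - x) :=
    abs_sub_le_mul_sub_of_hasDerivAt hcont hderiv hbound hx hxy hy
  have hint {u v : ℝ} (hu : a ≤ u) (huv : u ≤ v) (hv : v ≤ b) :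
      IntervalIntegrable f volume u v :=
    (hcont.mono (Icc_subset_Icc hu hv)).intervalIntegrable_of_Icc huv
  have i₁ := hint le_rfl ha₁ (by linarith)
  have i₂ := hint ha₁ h₁m (by linarith)
  have i₃ := hint (by linarith) hm₂ h₂b
  have i₄ := hint (by linarith) h₂b le_rfl
  have h₁ := abs_integral_sub_mul_left_le ha₁ i₁
    fun t ht => hlip le_rfl ht.1 (by linarith [ht.2])
  have h₂ := abs_integral_sub_mul_right_le h₁m i₂
    fun t ht => abs_sub_comm (f t) _ ▸ hlip (ha₁.trans ht.1) ht.2 (by linarith)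
  have h₃ := abs_integral_sub_mul_left_le hm₂ i₃
    fun t ht => hlip (by linarith) ht.1 (ht.2.trans h₂b)
  have h₄ := abs_integral_sub_mul_right_le h₂b i₄
    fun t ht => abs_sub_comm (f t) _ ▸ hlip (by linarith [ht.1]) ht.2 le_rfl
  rw [← integral_add_adjacent_intervals i₁ (i₂.trans (i₃.trans i₄)),
    ← integral_add_adjacent_intervals i₂ (i₃.trans i₄),
    ← integral_add_adjacent_intervals i₃ i₄]
  rw [abs_le] at h₁ h₂ h₃ h₄ ⊢
  constructor <;> linarith [h₁.1, h₁.2, h₂.1, h₂.2, h₃.1, h₃.2, h₄.1, h₄.2]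

/-- Corollary 4.7: three-point inequality at the midpoint. -/
theorem corollary_4_7 (a b α₁ α₂ M : ℝ) (hab : a < b)
    (hα₁ : α₁ ∈ Set.Icc a ((a + b) / 2)) (hα₂ : α₂ ∈ Set.Icc ((a + b) / 2) b)
    (f f' : ℝ → ℝ)
    (hcont : ContinuousOn f (Set.Icc a b))
    (hderiv : ∀ t ∈ Set.Ioo a b, HasDerivAt f (f' t) t)
    (hM : 0 ≤ M) (hbound : ∀ t ∈ Set.Ioo a b, |f' t| ≤ M) :
    |(∫ t in a..b, f t) -
        ((α₁ - a) * f a + (α₂ - α₁) * f ((a + b) / 2) + (b - α₂) * f b)| ≤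
      M * ((α₁ - a) ^ 2 + ((a + b) / 2 - α₁) ^ 2 + (α₂ - (a + b) / 2) ^ 2 +
        (b - α₂) ^ 2) / 2 :=
  corollary_4_7_general a b α₁ α₂ M hα₁ hα₂ f f' hcont hderiv hbound
end

section
/- Let a < b be real numbers. Let f : ℝ → ℝ be continuous on [a,b] and differentiable on (a,b), and let M ≥ 0 satisfy |f'(t)| ≤ M for all t ∈ (a,b). Then |∫_a^b f(t) dt − ((b−a)/2)·((f(a) + f(b))/2 + f((a+b)/2))| ≤ M·(b − a)²/8. -/
open MeasureTheory Set intervalIntegral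
open scoped NNReal

/-! The quadrature is the two-panel trapezoidal rule `trapezoidal_integral f 2 a b`. A derivative
bounded by `M` makes `f` `M`-Lipschitz on `[a, b]`, and for an `M`-Lipschitz function a single
trapezoid of width `w` errs by at most `M w² / 4`: on the left half of the panel compare `f` with
its value at the left endpoint, on the right half with its value at the right endpoint. Two panels
of width `(b - a) / 2` give `M (b - a)² / 8`. -/

theorem lipschitzOnWith_Icc_of_hasDerivAt {f f' : ℝ → ℝ} {a b : ℝ} {K : ℝ≥0}
    (hab : a < b) (hcont : ContinuousOn f (Icc a b)) (hderiv : ∀ t ∈ Ioo a b, HasDerivAt f (f' t) t)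
    (hbound : ∀ t ∈ Ioo a b, ‖f' t‖₊ ≤ K) : LipschitzOnWith K f (Icc a b) := by
  rw [← closure_Ioo hab.ne] at hcont ⊢
  exact (convex_Ioo a b).lipschitzOnWith_of_nnnorm_hasDerivWithin_le
    (fun t ht => (hderiv t ht).hasDerivWithinAt) hbound |>.closure hcont

theorem abs_integral_sub_mul_le_integral {f g : ℝ → ℝ} {u v y : ℝ} (huv : u ≤ v)
    (hf : IntervalIntegrable f volume u v) (hg : IntervalIntegrable g volume u v)
    (h : ∀ t ∈ Icc u v, |f t - y| ≤ g t) :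
    |(∫ t in u..v, f t) - (v - u) * y| ≤ ∫ t in u..v, g t := by
  have hsub : (∫ t in u..v, f t) - (v - u) * y = ∫ t in u..v, (f t - y) := by
    rw [intervalIntegral.integral_sub hf intervalIntegrable_const, intervalIntegral.integral_const,
      smul_eq_mul]
  rw [hsub, ← Real.norm_eq_abs]
  exact norm_integral_le_of_norm_le huv
    (ae_of_all _ fun t ht => h t (Ioc_subset_Icc_self ht)) hg

namespace LipschitzOnWith

variable {f : ℝ → ℝ} {K : ℝ≥0} {u v : ℝ}

theorem abs_integral_sub_mul_left_le (huv : u ≤ v) (hf : LipschitzOnWith K f (Icc u v)) :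
    |(∫ t in u..v, f t) - (v - u) * f u| ≤ K * (v - u) ^ 2 / 2 := by
  have hint : ∫ t in u..v, K * (t - u) = K * (v - u) ^ 2 / 2 := by
    rw [intervalIntegral.integral_const_mul, integral_comp_sub_right (fun x => x), integral_id]
    ring
  refine (abs_integral_sub_mul_le_integral huv (hf.continuousOn.intervalIntegrable_of_Icc huv)
    ((by fun_prop : Continuous _).intervalIntegrable _ _) fun t ht => ?_).trans_eq hint
  have := hf.dist_le_mul t ht u (left_mem_Icc.2 huv)
  rwa [Real.dist_eq, Real.dist_eq, abs_of_nonneg (sub_nonneg.2 ht.1)] at this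

theorem abs_integral_sub_mul_right_le (huv : u ≤ v) (hf : LipschitzOnWith K f (Icc u v)) :
    |(∫ t in u..v, f t) - (v - u) * f v| ≤ K * (v - u) ^ 2 / 2 := by
  have hint : ∫ t in u..v, K * (v - t) = K * (v - u) ^ 2 / 2 := by
    rw [intervalIntegral.integral_const_mul, integral_comp_sub_left (fun x => x), integral_id]
    ring
  refine (abs_integral_sub_mul_le_integral huv (hf.continuousOn.intervalIntegrable_of_Icc huv)
    ((by fun_prop : Continuous _).intervalIntegrable _ _) fun t ht => ?_).trans_eq hint
  have := hf.dist_le_mul t ht v (right_mem_Icc.2 huv)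
  rwa [Real.dist_eq, Real.dist_eq, abs_sub_comm t, abs_of_nonneg (sub_nonneg.2 ht.2)] at this

theorem abs_trapezoidal_error_one_le {a b : ℝ} (hab : a ≤ b)
    (hf : LipschitzOnWith K f (Icc a b)) :
    |trapezoidal_error f 1 a b| ≤ K * (b - a) ^ 2 / 4 := by
  obtain ⟨m, hm⟩ : ∃ m, m = (a + b) / 2 := ⟨_, rfl⟩
  have ham : a ≤ m := by linarith
  have hmb : m ≤ b := by linarith
  have hsplit : trapezoidal_error f 1 a b =
      -(((∫ t in a..m, f t) - (m - a) * f a) + ((∫ t in m..b, f t) - (b - m) * f b)) := by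
    rw [trapezoidal_error, trapezoidal_integral_one, ← integral_add_adjacent_intervals
      ((hf.continuousOn.mono (Icc_subset_Icc le_rfl hmb)).intervalIntegrable_of_Icc ham)
      ((hf.continuousOn.mono (Icc_subset_Icc ham le_rfl)).intervalIntegrable_of_Icc hmb)]
    rw [hm]; ring
  rw [hsplit, abs_neg]
  calc _ ≤ K * (m - a) ^ 2 / 2 + K * (b - m) ^ 2 / 2 :=
        (abs_add_le _ _).trans <| add_le_add
          ((hf.mono (Icc_subset_Icc le_rfl hmb)).abs_integral_sub_mul_left_le ham)
          ((hf.mono (Icc_subset_Icc ham le_rfl)).abs_integral_sub_mul_right_le hmb)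
    _ = K * (b - a) ^ 2 / 4 := by rw [hm]; ring

theorem abs_trapezoidal_error_le {a b : ℝ} {N : ℕ} (hN : 0 < N) (hab : a ≤ b)
    (hf : LipschitzOnWith K f (Icc a b)) :
    |trapezoidal_error f N a b| ≤ K * (b - a) ^ 2 / (4 * N) := by
  obtain ⟨h, hh, rfl⟩ : ∃ h, 0 ≤ h ∧ b = a + N * h :=
    ⟨(b - a) / N, by positivity, by field_simp; ring⟩
  have hpiece : ∀ i ∈ Finset.range N,
      |trapezoidal_error f 1 (a + i * h) (a + (i + 1) * h)| ≤ K * h ^ 2 / 4 := by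
    intro i hi
    have hiN : (i : ℝ) + 1 ≤ N := by exact_mod_cast Finset.mem_range.1 hi
    have hsub : Icc (a + i * h) (a + (i + 1) * h) ⊆ Icc a (a + N * h) :=
      Icc_subset_Icc (by nlinarith) (by nlinarith)
    convert (hf.mono hsub).abs_trapezoidal_error_one_le (by nlinarith) using 3
    ring
  rw [← sum_trapezoidal_error_adjacent_intervals hN
    (hf.continuousOn.intervalIntegrable_of_Icc hab)]
  calc _ ≤ ∑ i ∈ Finset.range N, K * h ^ 2 / 4 :=
        (Finset.abs_sum_le_sum_abs _ _).trans (Finset.sum_le_sum hpiece)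
    _ = K * (a + N * h - a) ^ 2 / (4 * N) := by
      rw [Finset.sum_const, Finset.card_range, nsmul_eq_mul, add_sub_cancel_left]
      field_simp

end LipschitzOnWith

/-- Averaged mid-point-trapezoid inequality (continuous case). -/
theorem averaged_midpoint_trapezoid_inequality (a b M : ℝ) (hab : a < b)
    (f f' : ℝ → ℝ)
    (hcont : ContinuousOn f (Set.Icc a b))
    (hderiv : ∀ t ∈ Set.Ioo a b, HasDerivAt f (f' t) t)
    (hM : 0 ≤ M) (hbound : ∀ t ∈ Set.Ioo a b, |f' t| ≤ M) :
    |(∫ t in a..b, f t) - (b - a) / 2 * ((f a + f b) / 2 + f ((a + b) / 2))| ≤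
      M * (b - a) ^ 2 / 8 := by
  have hlip : LipschitzOnWith ⟨M, hM⟩ f (Icc a b) :=
    lipschitzOnWith_Icc_of_hasDerivAt hab hcont hderiv hbound
  have htrap : trapezoidal_integral f 2 a b =
      (b - a) / 2 * ((f a + f b) / 2 + f ((a + b) / 2)) := by
    have hmid : a + (b - a) / 2 = (a + b) / 2 := by ring
    simp [trapezoidal_integral, hmid]
  have := hlip.abs_trapezoidal_error_le two_pos hab.le
  rwa [trapezoidal_error, htrap, abs_sub_comm, Nat.cast_ofNat, show (4 : ℝ) * 2 = 8 by norm_num]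
    at this
end

section
/- Let n ≥ 1 and k ≥ 1 be integers, let 0 = j₀ < j₁ < ⋯ < j_{k−1} < j_k = n be integers, and let p₀, p₁, …, p_{k+1} be integers with p₀ = 0, p_{k+1} = n, and p_i ∈ [j_{i−1}, j_i] for i = 1, …, k. Let (x_j)_{j=0}^{n} be real numbers. Then ∑_{i=0}^{k} (p_{i+1} − p_i)·x_{j_i} = ∑_{j=1}^{n} x_j + ∑_{i=0}^{k−1} ∑_{j=j_i}^{j_{i+1}−1} (j − p_{i+1})·(x_{j+1} − x_j). -/
/-- Summation by parts on `Ico a b`. -/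
lemma sbp (x : ℕ → ℝ) (q : ℝ) : ∀ b a : ℕ, a ≤ b →
    ∑ m ∈ Finset.Ico a b, ((m : ℝ) - q) * (x (m + 1) - x m) =
      ((b : ℝ) - q) * x b - ((a : ℝ) - q) * x a - ∑ m ∈ Finset.Ico a b, x (m + 1) := by
  intro b
  induction b with
  | zero => intro a ha; interval_cases a; simp
  | succ b ih =>
    intro a ha
    rcases Nat.lt_or_ge a (b + 1) with h | h
    · have hab : a ≤ b := Nat.lt_succ_iff.mp h
      rw [Finset.sum_Ico_succ_top hab, Finset.sum_Ico_succ_top hab, ih a hab]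
      push_cast
      ring
    · have : a = b + 1 := le_antisymm ha h
      subst this; simp
  
/-- Blocks partition: consecutive `Ico` sums collapse. -/
lemma blocks (j : ℕ → ℕ) (f : ℕ → ℝ) : ∀ K : ℕ, (∀ i < K, j i ≤ j (i + 1)) →
    ∑ i ∈ Finset.range K, ∑ m ∈ Finset.Ico (j i) (j (i + 1)), f m =
      ∑ m ∈ Finset.Ico (j 0) (j K), f m := by
  intro K
  induction K with
  | zero => simp
  | succ K ih =>
    intro h
    have h0K : j 0 ≤ j K := by
      clear ih
      induction K with
      | zero => exact le_rfl
      | succ K ih2 =>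
        exact le_trans (ih2 (fun i hi => h i (Nat.lt_succ_of_lt hi)))
          (h K (by omega))
    rw [Finset.sum_range_succ, ih (fun i hi => h i (Nat.lt_succ_of_lt hi)),
      Finset.sum_Ico_consecutive _ h0K (h K (Nat.lt_succ_self _))]

lemma shift_sum (x : ℕ → ℝ) (n : ℕ) :
    ∑ m ∈ Finset.Ico 0 n, x (m + 1) = ∑ m ∈ Finset.Icc 1 n, x m := by
  induction n with
  | zero => simp
  | succ n ih =>
    rw [Finset.sum_Ico_succ_top (Nat.zero_le n), ih,
      Finset.sum_Icc_succ_top (Nat.le_add_left 1 n)]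

/-- Generalized Montgomery Identity on the time scale ℤ. -/
theorem discrete_montgomery_identity (n k : ℕ) (hn : 1 ≤ n) (hk : 1 ≤ k)
    (j p : ℕ → ℕ) (hj0 : j 0 = 0) (hjk : j k = n)
    (hmono : ∀ i < k, j i < j (i + 1))
    (hp0 : p 0 = 0) (hpk : p (k + 1) = n)
    (hp : ∀ i < k, j i ≤ p (i + 1) ∧ p (i + 1) ≤ j (i + 1))
    (x : ℕ → ℝ) :
    ∑ i ∈ Finset.range (k + 1), ((p (i + 1) : ℝ) - (p i : ℝ)) * x (j i) =
      (∑ m ∈ Finset.Icc 1 n, x m) +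
        ∑ i ∈ Finset.range k, ∑ m ∈ Finset.Ico (j i) (j (i + 1)),
          ((m : ℝ) - (p (i + 1) : ℝ)) * (x (m + 1) - x m) := by
  set g : ℕ → ℝ := fun i => ((j i : ℝ) - (p i : ℝ)) * x (j i) with hg
  -- rewrite inner sums by summation by parts
  have hinner : ∀ i ∈ Finset.range k,
      ∑ m ∈ Finset.Ico (j i) (j (i + 1)), ((m : ℝ) - (p (i + 1) : ℝ)) * (x (m + 1) - x m)
      = (g (i + 1) - g i + ((p (i + 1) : ℝ) - (p i : ℝ)) * x (j i))
        - ∑ m ∈ Finset.Ico (j i) (j (i + 1)), x (m + 1) := by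
    intro i hi
    rw [Finset.mem_range] at hi
    rw [sbp x (p (i + 1)) (j (i + 1)) (j i) (le_of_lt (hmono i hi))]
    simp only [hg]
    ring
  rw [Finset.sum_congr rfl hinner, Finset.sum_sub_distrib,
    blocks j (fun m => x (m + 1)) k (fun i hi => le_of_lt (hmono i hi)),
    hj0, hjk, shift_sum]
  have htel : ∑ i ∈ Finset.range k,
      (g (i + 1) - g i + ((p (i + 1) : ℝ) - (p i : ℝ)) * x (j i))
      = (g k - g 0) + ∑ i ∈ Finset.range k, ((p (i + 1) : ℝ) - (p i : ℝ)) * x (j i) := by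
    rw [Finset.sum_add_distrib, Finset.sum_range_sub g]
  rw [htel]
  have hgk : g k = ((p (k + 1) : ℝ) - (p k : ℝ)) * x (j k) := by
    simp only [hg, hjk, hpk]
  have hg0 : g 0 = 0 := by simp [hg, hj0, hp0]
  rw [Finset.sum_range_succ, hgk, hg0]
  ring
end

section
/- For every real constant c < 1/4 there exist an integer k ≥ 1, real numbers a = x₀ < x₁ < ⋯ < x_k = b, real numbers α₀, α₁, …, α_{k+1} with α₀ = a, α_{k+1} = b and α_i ∈ [x_{i−1}, x_i] for i = 1, …, k, a function f : ℝ → ℝ continuous on [a,b] and differentiable on (a,b), and M > 0 with |f'(t)| ≤ M for all t ∈ (a,b), such that |∫_a^b f(t) dt − ∑_{i=0}^{k} (α_{i+1} − α_i)·f(x_i)| > M·( c·∑_{i=0}^{k−1} (x_{i+1} − x_i)² + ∑_{i=0}^{k−1} (α_{i+1} − (x_i + x_{i+1})/2)² ). (For instance k = 1, f(t) = t, α₁ = b gives left-hand side (b−a)²/2 and right-hand side (c + 1/4)(b−a)² with M = 1.) -/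
/-- Sharpness of the constant 1/4 in the continuous generalized
Ostrowski inequality for k points. -/
theorem generalized_ostrowski_continuous_sharp (c : ℝ) (hc : c < 1 / 4) :
    ∃ (k : ℕ) (x α : ℕ → ℝ) (f f' : ℝ → ℝ) (M : ℝ),
      1 ≤ k ∧
      (∀ i < k, x i < x (i + 1)) ∧
      α 0 = x 0 ∧ α (k + 1) = x k ∧
      (∀ i < k, α (i + 1) ∈ Set.Icc (x i) (x (i + 1))) ∧
      ContinuousOn f (Set.Icc (x 0) (x k)) ∧
      (∀ t ∈ Set.Ioo (x 0) (x k), HasDerivAt f (f' t) t) ∧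
      0 < M ∧
      (∀ t ∈ Set.Ioo (x 0) (x k), |f' t| ≤ M) ∧
      |(∫ t in (x 0)..(x k), f t) -
          ∑ i ∈ Finset.range (k + 1), (α (i + 1) - α i) * f (x i)| >
        M * (c * ∑ i ∈ Finset.range k, (x (i + 1) - x i) ^ 2 +
          ∑ i ∈ Finset.range k, (α (i + 1) - (x i + x (i + 1)) / 2) ^ 2) := by
  -- k = 1 on [0, 1] with α₁ = 1 and f = id: the quadrature sum vanishes, so the error is
  -- ∫₀¹ t dt = 1/2, whereas the bound is c + 1/4.
  let x : ℕ → ℝ := fun i => if i = 0 then 0 else 1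
  have hx₀ : x 0 = 0 := rfl
  have hx_succ (i : ℕ) : x (i + 1) = 1 := rfl
  refine ⟨1, x, x, id, fun _ => 1, 1, le_rfl, ?_, rfl, rfl, ?_, continuousOn_id,
    fun t _ => hasDerivAt_id t, one_pos, fun t _ => by norm_num, ?_⟩
  · intro i hi
    obtain rfl : i = 0 := by omega
    norm_num [hx₀, hx_succ]
  · intro i hi
    obtain rfl : i = 0 := by omega
    norm_num [hx₀, hx_succ]
  · have h_integral : ∫ t in (0 : ℝ)..1, t = 1 / 2 := by norm_num [integral_id]
    norm_num [Finset.sum_range_succ, hx₀, hx_succ, h_integral]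
    linarith
end
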